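/- arXiv:1511.08584 — 8 statements merged into one kernel-verified Lean document; each statement's English description precedes it below -/
import Mathlib

section
/- Let Ω ⊆ ℂ be a domain with Ω ≠ ℂ, z₀ ∈ ∂Ω, z ∈ Ω, and let d = |z - z₀| > 0. The set F(Ω, z, z₀) of holomorphic functions f on Ω whose Taylor series at z has radius of convergence at most d is a Gδ subset of the space H(Ω) of holomorphic functions on Ω with the topology of uniform convergence on compact subsets. -/
/-! The Taylor series of `f` at `z` has radius at most `d` iff for every `k` the sequence
`‖f⁽ⁿ⁾(z)‖ / n! · (d + 1/(k+1))ⁿ` is unbounded, i.e. `f` lies in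
`⋂ₖ ⋂_C ⋃ₙ {f | C < ‖f⁽ⁿ⁾(z)‖ / n! · (d + 1/(k+1))ⁿ}`. By Weierstrass, `f ↦ f⁽ⁿ⁾(z)` is continuous
for locally uniform convergence, so this is a countable intersection of open sets. -/

open Filter Topology
open scoped NNReal ENNReal

theorem FormalMultilinearSeries.radius_le_coe_iff_forall_exists_lt {𝕜 E F : Type*}
    [NontriviallyNormedField 𝕜] [NormedAddCommGroup E] [NormedSpace 𝕜 E] [NormedAddCommGroup F]
    [NormedSpace 𝕜 F] (p : FormalMultilinearSeries 𝕜 E F) (r : ℝ≥0) :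
    p.radius ≤ r ↔ ∀ k C : ℕ, ∃ n, (C : ℝ) < ‖p n‖ * ((r + (k + 1 : ℝ≥0)⁻¹ : ℝ≥0) : ℝ) ^ n := by
  constructor
  · intro hr k C
    by_contra! hbound
    have hle := (p.le_radius_of_bound C hbound).trans hr
    rw [ENNReal.coe_le_coe] at hle
    exact (lt_add_of_pos_right r (by positivity)).not_ge hle
  · intro h
    by_contra! hlt
    obtain ⟨r', hr, hr'⟩ := ENNReal.lt_iff_exists_nnreal_btwn.1 hlt
    rw [ENNReal.coe_lt_coe] at hr
    obtain ⟨k, hk⟩ := exists_nat_one_div_lt (sub_pos.2 (show (r : ℝ) < r' from hr))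
    have hsmall : ((r + (k + 1 : ℝ≥0)⁻¹ : ℝ≥0) : ℝ≥0∞) < p.radius := by
      refine lt_of_le_of_lt ?_ hr'
      rw [ENNReal.coe_le_coe, ← NNReal.coe_le_coe]
      push_cast
      rw [one_div] at hk
      linarith
    obtain ⟨C, -, hC⟩ := p.norm_mul_pow_le_of_lt_radius hsmall
    obtain ⟨m, hm⟩ := exists_nat_ge C
    obtain ⟨n, hn⟩ := h k m
    linarith [hC n]

theorem AnalyticAt.forall_hasFPowerSeriesAt_radius_le_iff {𝕜 : Type*} [NontriviallyNormedField 𝕜]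
    [CompleteSpace 𝕜] [CharZero 𝕜] {f : 𝕜 → 𝕜} {z : 𝕜} (hf : AnalyticAt 𝕜 f z) (R : ℝ≥0∞) :
    (∀ p : FormalMultilinearSeries 𝕜 𝕜 𝕜, HasFPowerSeriesAt f p z → p.radius ≤ R) ↔
      (FormalMultilinearSeries.ofScalars 𝕜
        (fun n ↦ iteratedDeriv n f z / (n.factorial : 𝕜))).radius ≤ R :=
  ⟨fun h => h _ hf.hasFPowerSeriesAt,
    fun h _ hp => hp.eq_formalMultilinearSeries hf.hasFPowerSeriesAt ▸ h⟩

theorem isGδ_setOf_forall_hasFPowerSeriesAt_radius_le {X 𝕜 : Type*} [TopologicalSpace X]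
    [NontriviallyNormedField 𝕜] [CompleteSpace 𝕜] [CharZero 𝕜] {F : X → 𝕜 → 𝕜} {z : 𝕜}
    (hF : ∀ x, AnalyticAt 𝕜 (F x) z) (hcont : ∀ n, Continuous fun x => iteratedDeriv n (F x) z)
    (r : ℝ≥0) :
    IsGδ {x | ∀ p : FormalMultilinearSeries 𝕜 𝕜 𝕜, HasFPowerSeriesAt (F x) p z → p.radius ≤ r} := by
  have hset : {x | ∀ p : FormalMultilinearSeries 𝕜 𝕜 𝕜, HasFPowerSeriesAt (F x) p z →
      p.radius ≤ r} = ⋂ k : ℕ, ⋂ C : ℕ, ⋃ n : ℕ, {x | (C : ℝ) <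
        ‖iteratedDeriv n (F x) z / (n.factorial : 𝕜)‖ * ((r + (k + 1 : ℝ≥0)⁻¹ : ℝ≥0) : ℝ) ^ n} := by
    ext x
    rw [Set.mem_ofPred_eq, (hF x).forall_hasFPowerSeriesAt_radius_le_iff,
      FormalMultilinearSeries.radius_le_coe_iff_forall_exists_lt]
    simp only [FormalMultilinearSeries.ofScalars_norm, Set.mem_iInter, Set.mem_iUnion,
      Set.mem_ofPred_eq]
  rw [hset]
  exact .iInter fun k => .iInter fun C => (isOpen_iUnion fun n => isOpen_lt continuous_const
    (((hcont n).div_const _).norm.mul continuous_const)).isGδ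

theorem TendstoLocallyUniformlyOn.iteratedDeriv {ι : Type*} {l : Filter ι} {U : Set ℂ}
    {F : ι → ℂ → ℂ} {f : ℂ → ℂ} (hf : TendstoLocallyUniformlyOn F f l U)
    (hF : ∀ᶠ i in l, DifferentiableOn ℂ (F i) U) (hU : IsOpen U) (n : ℕ) :
    TendstoLocallyUniformlyOn (fun i => iteratedDeriv n (F i)) (iteratedDeriv n f) l U := by
  induction n with
  | zero => simpa using hf
  | succ n ih =>
    simp only [iteratedDeriv_succ]
    refine ih.deriv ?_ hU
    filter_upwards [hF] with i hi
    rw [iteratedDeriv_eq_iterate]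
    exact ((hi.analyticOnNhd hU).iterated_deriv n).differentiableOn

theorem UniformOnFun.tendsto_iff_tendstoLocallyUniformlyOn {ι α β : Type*} [TopologicalSpace α]
    [LocallyCompactSpace α] [UniformSpace β] {U : Set α} (hU : IsOpen U) {l : Filter ι}
    {F : ι → UniformOnFun α β {K | K ⊆ U ∧ IsCompact K}}
    {f : UniformOnFun α β {K | K ⊆ U ∧ IsCompact K}} :
    Tendsto F l (𝓝 f) ↔ TendstoLocallyUniformlyOn (fun i => toFun _ (F i)) (toFun _ f) l U := by
  rw [UniformOnFun.tendsto_iff_tendstoUniformlyOn,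
    tendstoLocallyUniformlyOn_iff_forall_isCompact hU]
  exact ⟨fun h K hKU hK => h K ⟨hKU, hK⟩, fun h K hK => h K hK.1 hK.2⟩

theorem continuous_iteratedDeriv_apply_of_differentiableOn {Ω : Set ℂ} (hΩ : IsOpen Ω) {z : ℂ}
    (hz : z ∈ Ω) (n : ℕ) :
    Continuous fun f : {g : UniformOnFun ℂ ℂ {K | K ⊆ Ω ∧ IsCompact K} //
        DifferentiableOn ℂ (UniformOnFun.toFun _ g) Ω} =>
      iteratedDeriv n (UniformOnFun.toFun _ f.1) z :=
  continuous_iff_continuousAt.2 fun _ =>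
    (TendstoLocallyUniformlyOn.iteratedDeriv
      ((UniformOnFun.tendsto_iff_tendstoLocallyUniformlyOn hΩ).1 continuousAt_subtype_val)
      (Eventually.of_forall fun g => g.2) hΩ n).tendsto_at hz

theorem stmt2_general (Ω : Set ℂ) (hΩo : IsOpen Ω) (z₀ : ℂ) (z : ℂ) (hz : z ∈ Ω) :
    IsGδ {f : {g : UniformOnFun ℂ ℂ {K : Set ℂ | K ⊆ Ω ∧ IsCompact K} //
        DifferentiableOn ℂ (UniformOnFun.toFun _ g) Ω} |
      ∀ p : FormalMultilinearSeries ℂ ℂ ℂ,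
        HasFPowerSeriesAt (UniformOnFun.toFun _ f.1) p z →
          p.radius ≤ ENNReal.ofReal (dist z z₀)} := by
  rw [← edist_dist, edist_nndist]
  exact isGδ_setOf_forall_hasFPowerSeriesAt_radius_le
    (fun f => f.2.analyticAt (hΩo.mem_nhds hz))
    (continuous_iteratedDeriv_apply_of_differentiableOn hΩo hz) _

/-- In the space `H(Ω)` of holomorphic functions on a domain `Ω ≠ ℂ` with
the topology of uniform convergence on compact subsets, the set of `f` whose Taylor
series at a fixed `z ∈ Ω` has radius of convergence at most `d = |z - z₀|`
(`z₀` a boundary point) is a Gδ set. -/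
theorem stmt2 (Ω : Set ℂ) (hΩo : IsOpen Ω) (hΩc : IsConnected Ω) (hΩne : Ω ≠ Set.univ)
    (z₀ : ℂ) (hz₀ : z₀ ∈ frontier Ω) (z : ℂ) (hz : z ∈ Ω) :
    IsGδ {f : {g : UniformOnFun ℂ ℂ {K : Set ℂ | K ⊆ Ω ∧ IsCompact K} //
        DifferentiableOn ℂ (UniformOnFun.toFun _ g) Ω} |
      ∀ p : FormalMultilinearSeries ℂ ℂ ℂ,
        HasFPowerSeriesAt (UniformOnFun.toFun _ f.1) p z →
          p.radius ≤ ENNReal.ofReal (dist z z₀)} :=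
  stmt2_general Ω hΩo z₀ z hz
end

section
/- Let f : D → ℂ be holomorphic and bounded on the open unit disk D, continuous on D ∪ I for an open arc I ⊆ T of the unit circle, and suppose f vanishes identically on I. Then f vanishes identically on D. -/
/-!
Finitely many rotations `c⁻¹ • I` cover the unit circle. The product `g z = ∏ c, f (c * z)` is then
holomorphic on the disk and tends to `0` at every point of the circle, since one factor does and
the others are bounded. By the maximum modulus principle `g` vanishes, and by the identity
theorem so does one of its factors, that is, `f`.
-/

open Complex Metric Set Topology Filter

theorem AnalyticOnNhd.exists_eqOn_zero_of_prod_eqOn_zero {𝕜 A ι : Type*}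
    [NontriviallyNormedField 𝕜] [NormedCommRing A] [IsDomain A] [NormedAlgebra 𝕜 A]
    {U : Set 𝕜} {s : Finset ι} {F : ι → 𝕜 → A} (hF : ∀ i ∈ s, AnalyticOnNhd 𝕜 (F i) U)
    (hU : IsPreconnected U) (hne : U.Nonempty) (h : EqOn (fun z => ∏ i ∈ s, F i z) 0 U) :
    ∃ i ∈ s, EqOn (F i) 0 U := by
  classical
  induction s using Finset.induction_on with
  | empty =>
    obtain ⟨z, hz⟩ := hne
    simpa using h hz
  | @insert a s ha ih =>
    have hmul : ∀ z ∈ U, F a z * ∏ i ∈ s, F i z = 0 := fun z hz => by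
      simpa [Finset.prod_insert ha] using h hz
    rcases (hF a (s.mem_insert_self a)).eq_zero_or_eq_zero_of_mul_eq_zero
      (s.analyticOnNhd_fun_prod fun i hi => hF i (s.mem_insert_of_mem hi)) hmul hU with ha0 | hs0
    · exact ⟨a, s.mem_insert_self a, ha0⟩
    · obtain ⟨i, hi, hi0⟩ := ih (fun i hi => hF i (s.mem_insert_of_mem hi)) hs0
      exact ⟨i, s.mem_insert_of_mem hi, hi0⟩

theorem Filter.Tendsto.finset_prod_nhds_zero {α R ι : Type*} [NormedCommRing R] [NormOneClass R]
    {l : Filter α} {s : Finset ι} {F : ι → α → R} {i : ι} (hi : i ∈ s)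
    (hFi : Tendsto (F i) l (𝓝 0)) {M : ℝ} (hM : ∀ᶠ x in l, ∀ j ∈ s, ‖F j x‖ ≤ M) :
    Tendsto (fun x => ∏ j ∈ s, F j x) l (𝓝 0) := by
  classical
  simp_rw [← s.mul_prod_erase _ hi]
  refine hFi.zero_mul_isBoundedUnder_le ⟨M ^ (s.erase i).card, eventually_map.2 ?_⟩
  filter_upwards [hM] with x hx
  calc ‖∏ j ∈ s.erase i, F j x‖ ≤ ∏ j ∈ s.erase i, ‖F j x‖ := Finset.norm_prod_le _ _
    _ ≤ ∏ _j ∈ s.erase i, M :=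
      Finset.prod_le_prod (fun _ _ => norm_nonneg _) fun j hj => hx j (Finset.mem_of_mem_erase hj)
    _ = M ^ (s.erase i).card := Finset.prod_const M

theorem Complex.eqOn_zero_of_tendsto_frontier {E F : Type*} [NormedAddCommGroup E]
    [NormedSpace ℂ E] [Nontrivial E] [NormedAddCommGroup F] [NormedSpace ℂ F] {f : E → F} {U : Set E}
    (hUb : Bornology.IsBounded U) (hUo : IsOpen U) (hf : DifferentiableOn ℂ f U)
    (hfr : ∀ z ∈ frontier U, Tendsto f (𝓝[U] z) (𝓝 0)) : EqOn f 0 U := by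
  set G := U.indicator f
  have hGf : EqOn G f U := fun z hz => indicator_of_mem hz f
  have hG0 : ∀ z ∉ U, G z = 0 := fun z hz => indicator_of_notMem hz f
  have hGcont : ContinuousOn G (closure U) := by
    intro z hz
    by_cases hzU : z ∈ U
    · have hGf' : G =ᶠ[𝓝 z] f := eventually_of_mem (hUo.mem_nhds hzU) hGf
      exact ((hf.continuousOn.continuousAt (hUo.mem_nhds hzU)).congr hGf'.symm).continuousWithinAt
    · rw [ContinuousWithinAt, hG0 z hzU, ← union_sdiff_cancel (subset_closure (s := U)),
        nhdsWithin_union, tendsto_sup]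
      refine ⟨(hfr z ⟨hz, by rwa [hUo.interior_eq]⟩).congr' ?_, tendsto_const_nhds.congr' ?_⟩
      · exact eventually_nhdsWithin_of_forall fun w hw => (hGf hw).symm
      · exact eventually_nhdsWithin_of_forall fun w hw => (hG0 w hw.2).symm
  have hGle : ∀ z ∈ U, ‖G z‖ ≤ 0 := fun z hz =>
    norm_le_of_forall_mem_frontier_norm_le hUb ⟨hf.congr hGf, hGcont⟩
      (fun w hw => by rw [hG0 w (hUo.frontier_eq ▸ hw).2, norm_zero]) (subset_closure hz)
  intro z hz
  rw [← hGf hz]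
  exact norm_le_zero_iff.1 (hGle z hz)

theorem mapsTo_const_mul_ball_zero {𝕜 : Type*} [NormedDivisionRing 𝕜] {c : 𝕜} (hc : ‖c‖ = 1)
    (r : ℝ) : MapsTo (c * ·) (ball (0 : 𝕜) r) (ball 0 r) := fun z hz => by
  simpa [norm_mul, hc] using hz

theorem exists_finset_rotations_cover_sphere {U : Set ℂ} (hU : IsOpen U)
    (hne : (U ∩ sphere (0 : ℂ) 1).Nonempty) :
    ∃ t : Finset ℂ, (∀ c ∈ t, ‖c‖ = 1) ∧ ∀ ζ ∈ sphere (0 : ℂ) 1, ∃ c ∈ t, c * ζ ∈ U ∩ sphere 0 1 := by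
  obtain ⟨ζ₀, hζ₀U, hζ₀⟩ := hne
  have hcover : sphere (0 : ℂ) 1 ⊆ ⋃ c ∈ sphere (0 : ℂ) 1, (c * ·) ⁻¹' U := fun ζ hζ => by
    have hζ0 : ζ ≠ 0 := ne_zero_of_mem_unit_sphere ⟨ζ, hζ⟩
    refine mem_iUnion₂.2 ⟨ζ₀ * ζ⁻¹, ?_, by simpa [inv_mul_cancel_right₀ hζ0] using hζ₀U⟩
    simp_all
  obtain ⟨b, hbS, hb, hcov⟩ := (isCompact_sphere (0 : ℂ) 1).elim_finite_subcover_image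
    (fun c _ => hU.preimage (continuous_const_mul c)) hcover
  refine ⟨hb.toFinset, fun c hc => by simpa using hbS (hb.mem_toFinset.1 hc), fun ζ hζ => ?_⟩
  obtain ⟨c, hc, hcζ⟩ := mem_iUnion₂.1 (hcov hζ)
  refine ⟨c, hb.mem_toFinset.2 hc, hcζ, ?_⟩
  simp_all [mem_sphere_zero_iff_norm.1 (hbS hc)]

theorem stmt4_general (f : ℂ → ℂ) (I : Set ℂ)
    (hIne : I.Nonempty)
    (hIopen : ∃ U : Set ℂ, IsOpen U ∧ I = U ∩ sphere (0 : ℂ) 1)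
    (hf : DifferentiableOn ℂ f (ball (0 : ℂ) 1))
    (hbd : ∃ M : ℝ, ∀ z ∈ ball (0 : ℂ) 1, ‖f z‖ ≤ M)
    (hcont : ContinuousOn f (ball (0 : ℂ) 1 ∪ I))
    (hvanish : Set.EqOn f 0 I) :
    Set.EqOn f 0 (ball (0 : ℂ) 1) := by
  obtain ⟨U, hU, rfl⟩ := hIopen
  obtain ⟨M, hM⟩ := hbd
  obtain ⟨t, ht, hcover⟩ := exists_finset_rotations_cover_sphere hU hIne
  have hrot : ∀ c ∈ t, DifferentiableOn ℂ (fun z => f (c * z)) (ball 0 1) := fun c hc =>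
    hf.comp (differentiableOn_id.const_mul c) (mapsTo_const_mul_ball_zero (ht c hc) 1)
  have hprod : EqOn (fun z => ∏ c ∈ t, f (c * z)) 0 (ball 0 1) := by
    refine Complex.eqOn_zero_of_tendsto_frontier isBounded_ball isOpen_ball
      (DifferentiableOn.fun_finsetProd hrot) fun ζ hζ => ?_
    rw [frontier_ball 0 one_ne_zero] at hζ
    obtain ⟨c, hct, hcζ⟩ := hcover ζ hζ
    have hlim : Tendsto f (𝓝[ball 0 1] (c * ζ)) (𝓝 0) := by
      simpa [hvanish hcζ] using ((hcont _ (Or.inr hcζ)).mono subset_union_left).tendsto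
    refine Tendsto.finset_prod_nhds_zero hct (hlim.comp ?_) (eventually_nhdsWithin_of_forall
      fun z hz j hj => hM _ (mapsTo_const_mul_ball_zero (ht j hj) 1 hz))
    exact (continuous_const_mul c).continuousWithinAt.tendsto_nhdsWithin
      (mapsTo_const_mul_ball_zero (ht c hct) 1)
  obtain ⟨c, hct, hc0⟩ := AnalyticOnNhd.exists_eqOn_zero_of_prod_eqOn_zero
    (fun c hc => (hrot c hc).analyticOnNhd isOpen_ball) (convex_ball (0 : ℂ) 1).isPreconnected
    ⟨0, mem_ball_self one_pos⟩ hprod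
  have hc : c ≠ 0 := norm_ne_zero_iff.1 (by simp [ht c hct])
  intro z hz
  simpa [mul_inv_cancel_left₀ hc] using
    hc0 (mapsTo_const_mul_ball_zero (by simp [ht c hct] : ‖c⁻¹‖ = 1) 1 hz)

/-- A bounded holomorphic function on the open unit disk, continuous up to
a nonempty open arc `I` of the unit circle and vanishing on `I`, vanishes identically
on the disk. -/
theorem stmt4 (f : ℂ → ℂ) (I : Set ℂ)
    (hIsub : I ⊆ sphere (0 : ℂ) 1) (hIne : I.Nonempty)
    (hIopen : ∃ U : Set ℂ, IsOpen U ∧ I = U ∩ sphere (0 : ℂ) 1)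
    (hf : DifferentiableOn ℂ f (ball (0 : ℂ) 1))
    (hbd : ∃ M : ℝ, ∀ z ∈ ball (0 : ℂ) 1, ‖f z‖ ≤ M)
    (hcont : ContinuousOn f (ball (0 : ℂ) 1 ∪ I))
    (hvanish : Set.EqOn f 0 I) :
    Set.EqOn f 0 (ball (0 : ℂ) 1) :=
  stmt4_general f I hIne hIopen hf hbd hcont hvanish
end

section
/- Let γ : [0, 2π] → ℂ be an analytic Jordan curve and L = γ([0, 2π]) its image. If Ω ⊆ ℂ is open and f : Ω → ℂ is continuous on Ω and holomorphic on Ω \ L, then f is holomorphic on Ω. -/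
/-!
Where `Φ' ≠ 0` on the unit circle, `Φ ∘ exp` is a local biholomorphism taking the imaginary axis
onto the curve `L`, so pulled back by it `f` becomes continuous and holomorphic off a line; cutting
rectangles along the line shows that its rectangle integrals vanish, so it is holomorphic by
Morera's theorem. Injectivity of `Φ` forces the zeros of `Φ'` to be isolated, so only finitely many
points of `L` remain, and these are removable singularities of the continuous function `f`.
-/

open Complex Metric Set Filter Topology
open scoped Interval

namespace Complex

variable {E : Type*} [NormedAddCommGroup E] [NormedSpace ℂ E]

theorem integral_boundary_rect_eq_zero_of_re_notMem_Ioo {f : ℂ → E} {a : ℝ} {z w : ℂ}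
    (ha : a ∉ Ioo (min z.re w.re) (max z.re w.re))
    (Hc : ContinuousOn f ([[z.re, w.re]] ×ℂ [[z.im, w.im]]))
    (Hd : ∀ x ∈ Ioo (min z.re w.re) (max z.re w.re) ×ℂ Ioo (min z.im w.im) (max z.im w.im),
      x.re ≠ a → DifferentiableAt ℂ f x) :
    (∫ x : ℝ in z.re..w.re, f (x + z.im * I)) - (∫ x : ℝ in z.re..w.re, f (x + w.im * I)) +
      I • (∫ y : ℝ in z.im..w.im, f (re w + y * I)) -
      I • (∫ y : ℝ in z.im..w.im, f (re z + y * I)) = 0 :=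
  integral_boundary_rect_eq_zero_of_differentiable_on_off_countable f z w ∅ countable_empty Hc
    fun x hx => Hd x hx.1 fun hxa => ha (hxa ▸ hx.1.1)

theorem integral_boundary_rect_eq_zero_of_differentiableAt_off_re_eq {f : ℂ → E} (a : ℝ)
    (z w : ℂ) (Hc : ContinuousOn f ([[z.re, w.re]] ×ℂ [[z.im, w.im]]))
    (Hd : ∀ x ∈ Ioo (min z.re w.re) (max z.re w.re) ×ℂ Ioo (min z.im w.im) (max z.im w.im),
      x.re ≠ a → DifferentiableAt ℂ f x) :
    (∫ x : ℝ in z.re..w.re, f (x + z.im * I)) - (∫ x : ℝ in z.re..w.re, f (x + w.im * I)) +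
      I • (∫ y : ℝ in z.im..w.im, f (re w + y * I)) -
      I • (∫ y : ℝ in z.im..w.im, f (re z + y * I)) = 0 := by
  by_cases ha : a ∈ Ioo (min z.re w.re) (max z.re w.re)
  swap
  · exact integral_boundary_rect_eq_zero_of_re_notMem_Ioo ha Hc Hd
  have ha' : a ∈ [[z.re, w.re]] := Ioo_subset_Icc_self ha
  have hIoo {u v : ℝ} (hu : u ∈ [[z.re, w.re]]) (hv : v ∈ [[z.re, w.re]]) :
      Ioo (min u v) (max u v) ⊆ Ioo (min z.re w.re) (max z.re w.re) :=
    Ioo_subset_Ioo (le_min hu.1 hv.1) (max_le hu.2 hv.2)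
  have hleft := integral_boundary_rect_eq_zero_of_re_notMem_Ioo (f := f) (a := a)
    (z := z) (w := a + w.im * I) (by simp +contextual [le_of_lt])
    (by simpa using Hc.mono fun x hx => ⟨uIcc_subset_uIcc left_mem_uIcc ha' hx.1, hx.2⟩)
    (by simpa using fun x hx => Hd x ⟨hIoo left_mem_uIcc ha' hx.1, hx.2⟩)
  have hright := integral_boundary_rect_eq_zero_of_re_notMem_Ioo (f := f) (a := a)
    (z := a + z.im * I) (w := w) (by simp +contextual [le_of_lt])
    (by simpa using Hc.mono fun x hx => ⟨uIcc_subset_uIcc ha' right_mem_uIcc hx.1, hx.2⟩)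
    (by simpa using fun x hx => Hd x ⟨hIoo ha' right_mem_uIcc hx.1, hx.2⟩)
  have hint {y : ℝ} (hy : y ∈ [[z.im, w.im]]) (u v : ℝ) (hu : u ∈ [[z.re, w.re]])
      (hv : v ∈ [[z.re, w.re]]) :
      IntervalIntegrable (fun x : ℝ => f (x + y * I)) MeasureTheory.volume u v :=
    (Hc.comp (by fun_prop) fun x hx =>
      ⟨by simpa using uIcc_subset_uIcc hu hv hx, by simpa using hy⟩).intervalIntegrable
  simp only [add_re, ofReal_re, mul_re, I_re, I_im, ofReal_im, add_im, mul_im, mul_zero,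
    sub_zero, mul_one, add_zero, zero_add] at hleft hright
  rw [← intervalIntegral.integral_add_adjacent_intervals (b := a)
      (hint left_mem_uIcc _ _ left_mem_uIcc ha') (hint left_mem_uIcc _ _ ha' right_mem_uIcc),
    ← intervalIntegral.integral_add_adjacent_intervals (b := a)
      (hint right_mem_uIcc _ _ left_mem_uIcc ha') (hint right_mem_uIcc _ _ ha' right_mem_uIcc)]
  linear_combination (norm := module) hleft + hright

variable [CompleteSpace E]

theorem differentiableOn_of_differentiableAt_off_countable {U s : Set ℂ} {f : ℂ → E}
    (hU : IsOpen U) (hs : s.Countable) (hc : ContinuousOn f U)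
    (hd : ∀ z ∈ U \ s, DifferentiableAt ℂ f z) : DifferentiableOn ℂ f U := by
  intro z hz
  obtain ⟨ε, hε, hball⟩ := nhds_basis_closedBall.mem_iff.mp (hU.mem_nhds hz)
  lift ε to NNReal using hε.le
  have := hasFPowerSeriesOnBall_of_differentiable_off_countable hs (hc.mono hball)
    (fun w hw => hd w ⟨hball (ball_subset_closedBall hw.1), hw.2⟩) hε
  exact this.analyticAt.differentiableAt.differentiableWithinAt

theorem differentiableOn_of_differentiableAt_off_re_eq {U : Set ℂ} {f : ℂ → E} (a : ℝ)
    (hU : IsOpen U) (hc : ContinuousOn f U)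
    (hd : ∀ z ∈ U, z.re ≠ a → DifferentiableAt ℂ f z) : DifferentiableOn ℂ f U := by
  refine (isConservativeOn_and_continuousOn_iff_isDifferentiableOn hU).mp
    ⟨fun z w hzw => ?_, hc⟩
  rw [← add_eq_zero_iff_eq_neg, wedgeIntegral_add_wedgeIntegral_eq]
  exact integral_boundary_rect_eq_zero_of_differentiableAt_off_re_eq a z w (hc.mono hzw)
    fun x hx => hd x (hzw ⟨Ioo_subset_Icc_self hx.1, Ioo_subset_Icc_self hx.2⟩)

end Complex

section LocalInverse

variable {𝕜 F : Type*} [NontriviallyNormedField 𝕜] [CompleteSpace 𝕜] [NormedAddCommGroup F]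
  [NormedSpace 𝕜 F]

theorem HasStrictDerivAt.differentiableAt_of_differentiableAt_comp {Ψ : 𝕜 → 𝕜} {d ξ : 𝕜}
    {f : 𝕜 → F} (hΨ : HasStrictDerivAt Ψ d ξ) (hd : d ≠ 0)
    (hf : DifferentiableAt 𝕜 (f ∘ Ψ) ξ) :
    DifferentiableAt 𝕜 f (Ψ ξ) := by
  have hψ : HasStrictDerivAt (hΨ.localInverse Ψ d ξ hd) d⁻¹ (Ψ ξ) := hΨ.to_localInverse hd
  have hψΨ : hΨ.localInverse Ψ d ξ hd (Ψ ξ) = ξ :=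
    (hΨ.hasStrictFDerivAt_equiv hd).localInverse_apply_image
  have heq : f =ᶠ[𝓝 (Ψ ξ)] (f ∘ Ψ) ∘ hΨ.localInverse Ψ d ξ hd :=
    (hΨ.hasStrictFDerivAt_equiv hd).eventually_right_inverse.mono fun u hu => by simp [hu]
  rw [heq.differentiableAt_iff]
  exact (hψΨ ▸ hf).comp _ hψ.hasDerivAt.differentiableAt

end LocalInverse

section CriticalPoints

variable {𝕜 F : Type*} [RCLike 𝕜] [NormedAddCommGroup F] [NormedSpace 𝕜 F]
  [CompleteSpace F]

theorem AnalyticAt.eventually_deriv_ne_zero_of_injOn {Φ : 𝕜 → F} {U : Set 𝕜} {z : 𝕜}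
    (hΦ : AnalyticAt 𝕜 Φ z) (hU : U ∈ 𝓝 z) (hinj : InjOn Φ U) :
    ∀ᶠ w in 𝓝[≠] z, deriv Φ w ≠ 0 := by
  refine hΦ.deriv.eventually_eq_zero_or_eventually_ne_zero.resolve_left fun h0 => ?_
  obtain ⟨ε, hε, hball⟩ := eventually_nhds_iff_ball.mp (h0.and hΦ.eventually_analyticAt)
  have hconst : ∀ᶠ w in 𝓝 z, Φ w = Φ z := eventually_nhds_iff_ball.mpr ⟨ε, hε, fun w hw =>
    isOpen_ball.is_const_of_deriv_eq_zero (convex_ball z ε).isPreconnected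
      (fun x hx => (hball x hx).2.differentiableAt.differentiableWithinAt)
      (fun x hx => (hball x hx).1) hw (mem_ball_self hε)⟩
  obtain ⟨w, ⟨hwΦ, hwU⟩, hwz⟩ :=
    (((hconst.and hU).filter_mono (nhdsWithin_le_nhds (s := {z}ᶜ))).and
      self_mem_nhdsWithin).exists
  exact hwz (hinj hwU (mem_of_mem_nhds hU) hwΦ)

theorem IsCompact.finite_setOf_deriv_eq_zero_of_injOn {Φ : 𝕜 → F} {K U : Set 𝕜}
    (hK : IsCompact K) (hU : IsOpen U) (hKU : K ⊆ U)
    (hΦ : AnalyticOnNhd 𝕜 Φ U) (hinj : InjOn Φ U) : {z ∈ K | deriv Φ z = 0}.Finite := by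
  have : {z | deriv Φ z ≠ 0} ∈ codiscreteWithin K := by
    refine mem_codiscreteWithin.mpr fun z hz => disjoint_principal_right.mpr ?_
    filter_upwards [(hΦ z (hKU hz)).eventually_deriv_ne_zero_of_injOn (hU.mem_nhds (hKU hz)) hinj]
      with w hw hw' using hw'.2 hw
  convert hK.finite_sdiff_of_mem_codiscreteWithin this using 1
  ext; simp

end CriticalPoints

section AnalyticJordanCurve

theorem image_Icc_exp_mul_I : (fun t : ℝ => exp (t * I)) '' Icc 0 (2 * Real.pi) = sphere 0 1 := by
  have h : (fun t : ℝ => exp (t * I)) = circleMap 0 1 := by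
    funext t; simp [circleMap_zero]
  rw [h]
  refine (image_subset_range _ _).trans (by simp [range_circleMap]) |>.antisymm ?_
  simpa using (image_circleMap_Ioc 0 1).symm.subset.trans (image_mono Ioc_subset_Icc_self)

variable {A Ω : Set ℂ} {Φ f : ℂ → ℂ}

theorem differentiableAt_apply_of_mem_sphere_of_deriv_ne_zero (hA : IsOpen A)
    (hΦd : DifferentiableOn ℂ Φ A) (hΦinj : InjOn Φ A) (hsphere : sphere (0 : ℂ) 1 ⊆ A)
    (hΩ : IsOpen Ω) (hc : ContinuousOn f Ω)
    (hf : ∀ w ∈ Ω, w ∉ Φ '' sphere 0 1 → DifferentiableAt ℂ f w)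
    {z : ℂ} (hz : z ∈ sphere (0 : ℂ) 1) (hzΩ : Φ z ∈ Ω) (hΦz : deriv Φ z ≠ 0) :
    DifferentiableAt ℂ f (Φ z) := by
  set U := exp ⁻¹' (A ∩ Φ ⁻¹' Ω)
  have hU : IsOpen U := (hΦd.continuousOn.isOpen_inter_preimage hA hΩ).preimage continuous_exp
  -- `Φ ∘ exp` maps the line `re = 0` onto the curve, and nothing else onto it
  have hcomp : DifferentiableOn ℂ (f ∘ Φ ∘ exp) U := by
    refine differentiableOn_of_differentiableAt_off_re_eq 0 hU
      (hc.comp (hΦd.continuousOn.comp continuous_exp.continuousOn fun ζ hζ => hζ.1)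
        fun ζ hζ => hζ.2)
      fun ζ hζ hre => ?_
    have hΦζ : Φ (exp ζ) ∉ Φ '' sphere 0 1 := by
      rintro ⟨u, hu, hΦu⟩
      have := hΦinj (hsphere hu) hζ.1 hΦu ▸ hu
      simp [norm_exp, hre] at this
    exact (hf _ hζ.2 hΦζ).comp ζ
      ((hΦd.differentiableAt (hA.mem_nhds hζ.1)).comp ζ differentiableAt_exp)
  have hz0 : z ≠ 0 := ne_zero_of_mem_sphere one_ne_zero ⟨z, hz⟩
  have hξ : exp (log z) = z := exp_log hz0
  have hΨ : HasStrictDerivAt (Φ ∘ exp) (deriv Φ z * z) (log z) := by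
    have hΦ' : HasStrictDerivAt Φ (deriv Φ z) (exp (log z)) :=
      hξ.symm ▸ (hΦd.analyticAt (hA.mem_nhds (hsphere hz))).hasStrictDerivAt
    simpa only [hξ] using hΦ'.comp (log z) (hasStrictDerivAt_exp _)
  have := hΨ.differentiableAt_of_differentiableAt_comp (mul_ne_zero hΦz hz0)
    (hcomp.differentiableAt (hU.mem_nhds (by simpa [U, hξ] using ⟨hsphere hz, hzΩ⟩)))
  simpa [hξ] using this

theorem differentiableOn_of_differentiableOn_compl_image_sphere (hA : IsOpen A)
    (hΦd : DifferentiableOn ℂ Φ A) (hΦinj : InjOn Φ A) (hsphere : sphere (0 : ℂ) 1 ⊆ A)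
    (hΩ : IsOpen Ω) (hc : ContinuousOn f Ω)
    (hf : DifferentiableOn ℂ f (Ω \ Φ '' sphere 0 1)) : DifferentiableOn ℂ f Ω := by
  have hL : IsClosed (Φ '' sphere 0 1) :=
    ((isCompact_sphere 0 1).image_of_continuousOn (hΦd.continuousOn.mono hsphere)).isClosed
  have hf' : ∀ w ∈ Ω, w ∉ Φ '' sphere 0 1 → DifferentiableAt ℂ f w :=
    fun w hw hwL => hf.differentiableAt ((hΩ.sdiff hL).mem_nhds ⟨hw, hwL⟩)
  have hcrit : {z ∈ sphere (0 : ℂ) 1 | deriv Φ z = 0}.Finite :=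
    (isCompact_sphere 0 1).finite_setOf_deriv_eq_zero_of_injOn hA hsphere
      (hΦd.analyticOnNhd hA) hΦinj
  refine differentiableOn_of_differentiableAt_off_countable hΩ (hcrit.image Φ).countable hc ?_
  rintro w ⟨hw, hwcrit⟩
  by_cases hwL : w ∈ Φ '' sphere 0 1
  · obtain ⟨z, hz, rfl⟩ := hwL
    exact differentiableAt_apply_of_mem_sphere_of_deriv_ne_zero hA hΦd hΦinj hsphere hΩ hc hf' hz
      hw fun h => hwcrit ⟨z, ⟨hz, h⟩, rfl⟩
  · exact hf' w hw hwL

end AnalyticJordanCurve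

theorem stmt6_general (γ : ℝ → ℂ) (Φ : ℂ → ℂ) (r R : ℝ)
    (hr1 : r < 1) (hR : 1 < R)
    (hΦdiff : DifferentiableOn ℂ Φ {z : ℂ | r < ‖z‖ ∧ ‖z‖ < R})
    (hΦinj : Set.InjOn Φ {z : ℂ | r < ‖z‖ ∧ ‖z‖ < R})
    (hγ : ∀ t : ℝ, γ t = Φ (Complex.exp (t * Complex.I)))
    (L : Set ℂ) (hL : L = γ '' Set.Icc 0 (2 * Real.pi))
    (Ω : Set ℂ) (hΩ : IsOpen Ω) (f : ℂ → ℂ)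
    (hcont : ContinuousOn f Ω) (hf : DifferentiableOn ℂ f (Ω \ L)) :
    DifferentiableOn ℂ f Ω := by
  have hA : IsOpen {z : ℂ | r < ‖z‖ ∧ ‖z‖ < R} :=
    (isOpen_lt continuous_const continuous_norm).inter (isOpen_lt continuous_norm continuous_const)
  have hsphere : sphere (0 : ℂ) 1 ⊆ {z : ℂ | r < ‖z‖ ∧ ‖z‖ < R} := fun z hz => by
    rw [mem_sphere_zero_iff_norm] at hz
    exact ⟨hz ▸ hr1, hz ▸ hR⟩
  have hLΦ : L = Φ '' sphere 0 1 := by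
    rw [hL, ← image_Icc_exp_mul_I, image_image, funext hγ]
  exact differentiableOn_of_differentiableOn_compl_image_sphere hA hΦdiff hΦinj hsphere hΩ hcont
    (hLΦ ▸ hf)

/-- If `L` is the trace of an analytic Jordan curve
(`γ t = Φ (e^{it})` with `Φ` injective and holomorphic on an annulus `r < |z| < R`,
`0 < r < 1 < R`), `Ω` is open and `f : Ω → ℂ` is continuous on `Ω` and holomorphic on
`Ω \ L`, then `f` is holomorphic on `Ω`. -/
theorem stmt6 (γ : ℝ → ℂ) (Φ : ℂ → ℂ) (r R : ℝ)
    (hr : 0 < r) (hr1 : r < 1) (hR : 1 < R)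
    (hΦdiff : DifferentiableOn ℂ Φ {z : ℂ | r < ‖z‖ ∧ ‖z‖ < R})
    (hΦinj : Set.InjOn Φ {z : ℂ | r < ‖z‖ ∧ ‖z‖ < R})
    (hγ : ∀ t : ℝ, γ t = Φ (Complex.exp (t * Complex.I)))
    (L : Set ℂ) (hL : L = γ '' Set.Icc 0 (2 * Real.pi))
    (Ω : Set ℂ) (hΩ : IsOpen Ω) (f : ℂ → ℂ)
    (hcont : ContinuousOn f Ω) (hf : DifferentiableOn ℂ f (Ω \ L)) :
    DifferentiableOn ℂ f Ω :=
  stmt6_general γ Φ r R hr1 hR hΦdiff hΦinj hγ L hL Ω hΩ f hcont hf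
end

section
/- Let f : T → ℂ and t₀ ∈ ℝ. Then f agrees with a convergent real power series Σ a_n (t - t₀)^n in e^{it} for t near t₀ if and only if there exists an open set V ⊆ ℂ containing e^{it₀} and a holomorphic function F : V → ℂ with F = f on V ∩ T. -/
open Complex Metric Set Filter Topology

/-!
A convergent power series in `t - t₀` converges on a complex disc around `t₀`, so it defines a
holomorphic function `g` there; composing `g` with a holomorphic branch of `z ↦ -I * log z`
near `e^{it₀}`, which maps the nearby arc of the unit circle onto a real interval around `t₀`,
extends `f`. Conversely, if `F` is holomorphic near `e^{it₀}`, then `z ↦ F (exp (z * I))` is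
analytic at `t₀`, and its Taylor series restricted to real `t` is the required expansion.
-/

section PowerSeries

variable {𝕜 : Type*} [NontriviallyNormedField 𝕜]

theorem differentiableOn_tsum_mul_sub_pow [CompleteSpace 𝕜] {a : ℕ → 𝕜} {x : 𝕜}
    (hx : Summable fun n => a n * x ^ n) (c : 𝕜) :
    DifferentiableOn 𝕜 (fun z => ∑' n, a n * (z - c) ^ n) (ball c ‖x‖) := by
  set p := FormalMultilinearSeries.ofScalars 𝕜 a
  have hradius : (‖x‖₊ : ENNReal) ≤ p.radius :=
    p.le_radius_of_tendsto (l := 0) <| by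
      simpa [p, FormalMultilinearSeries.ofScalars_norm, norm_mul, Function.comp_def] using
        tendsto_norm.comp hx.tendsto_atTop_zero
  have hmaps : MapsTo (fun z => z - c) (ball c ‖x‖) (eball 0 p.radius) := fun z hz =>
    lt_of_lt_of_le (by simpa [edist_dist, dist_eq_norm, ← NNReal.coe_lt_coe] using hz) hradius
  refine (p.analyticOnNhd.differentiableOn.comp (differentiableOn_id.sub_const c) hmaps).congr
    fun z _ => ?_
  simp [p, FormalMultilinearSeries.sum, mul_comm]

theorem AnalyticAt.exists_eventually_hasSum_mul_sub_pow {f : 𝕜 → 𝕜} {c : 𝕜}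
    (hf : AnalyticAt 𝕜 f c) :
    ∃ a : ℕ → 𝕜, ∀ᶠ z in 𝓝 c, HasSum (fun n => a n * (z - c) ^ n) (f z) := by
  obtain ⟨p, hp⟩ := hf
  exact ⟨p.coeff, (hasFPowerSeriesAt_iff'.mp hp).mono fun z hz => by simpa [mul_comm] using hz⟩

end PowerSeries

namespace Complex

noncomputable def angleBranch (t₀ : ℝ) (z : ℂ) : ℂ := t₀ - I * log (z / exp (t₀ * I))

theorem angleBranch_exp_mul_I_self (t₀ : ℝ) : angleBranch t₀ (exp (t₀ * I)) = t₀ := by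
  simp [angleBranch]

theorem differentiableAt_angleBranch {t₀ : ℝ} {z : ℂ}
    (hz : z / exp (t₀ * I) ∈ slitPlane) :
    DifferentiableAt ℂ (angleBranch t₀) z :=
  (differentiableAt_const _).sub
    ((differentiableAt_const _).mul
      ((differentiableAt_log hz).comp (f := fun z => z / exp (t₀ * I)) z (by fun_prop)))

theorem exp_angleBranch_mul_I (t₀ : ℝ) {z : ℂ} (hz : z ≠ 0) :
    exp (angleBranch t₀ z * I) = z := by
  have hmul : angleBranch t₀ z * I = t₀ * I + log (z / exp (t₀ * I)) := by
    simp only [angleBranch]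
    linear_combination (-log (z / exp (t₀ * I))) * I_sq
  rw [hmul, exp_add, exp_log (div_ne_zero hz (exp_ne_zero _)),
    mul_div_cancel₀ _ (exp_ne_zero _)]

theorem angleBranch_of_norm_eq_one (t₀ : ℝ) {z : ℂ} (hz : ‖z‖ = 1) :
    angleBranch t₀ z = ↑(t₀ + arg (z / exp (t₀ * I))) := by
  have hnorm : ‖z / exp (t₀ * I)‖ = 1 := by rw [norm_div, hz, norm_exp_ofReal_mul_I, div_one]
  simp only [angleBranch, log, hnorm, Real.log_one, ofReal_zero, zero_add, ofReal_add]
  linear_combination (-(arg (z / exp (t₀ * I)) : ℂ)) * I_sq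

theorem exists_ofReal_eq_angleBranch (t₀ : ℝ) {z : ℂ} (hz : ‖z‖ = 1) :
    ∃ t : ℝ, angleBranch t₀ z = t ∧ exp (t * I) = z := by
  refine ⟨_, angleBranch_of_norm_eq_one t₀ hz, ?_⟩
  rw [← angleBranch_of_norm_eq_one t₀ hz,
    exp_angleBranch_mul_I t₀ (norm_ne_zero_iff.mp (by simp [hz]))]

theorem exists_isOpen_differentiableOn_angleBranch (t₀ : ℝ) {ρ : ℝ} (hρ : 0 < ρ) :
    ∃ V : Set ℂ, IsOpen V ∧ exp (t₀ * I) ∈ V ∧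
      DifferentiableOn ℂ (angleBranch t₀) V ∧
      MapsTo (angleBranch t₀) V (ball (t₀ : ℂ) ρ) := by
  set U : Set ℂ := {z | z / exp (t₀ * I) ∈ slitPlane}
  have hU : IsOpen U := isOpen_slitPlane.preimage (by fun_prop)
  have hdiff : DifferentiableOn ℂ (angleBranch t₀) U := fun z hz =>
    (differentiableAt_angleBranch hz).differentiableWithinAt
  refine ⟨U ∩ angleBranch t₀ ⁻¹' ball (t₀ : ℂ) ρ,
    hdiff.continuousOn.isOpen_inter_preimage hU isOpen_ball, ⟨?_, ?_⟩,
    hdiff.mono inter_subset_left, fun z hz => hz.2⟩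
  · simp [U]
  · simp [angleBranch_exp_mul_I_self, hρ]

end Complex

theorem exists_differentiableOn_eqOn_sphere_of_hasSum {f : ℂ → ℂ} {t₀ δ : ℝ} {a : ℕ → ℂ}
    (hδ : 0 < δ) (ha : ∀ t : ℝ, |t - t₀| < δ →
      HasSum (fun n => a n * ((t : ℂ) - t₀) ^ n) (f (exp (t * I)))) :
    ∃ V : Set ℂ, IsOpen V ∧ exp (t₀ * I) ∈ V ∧
      ∃ F : ℂ → ℂ, DifferentiableOn ℂ F V ∧ EqOn F f (V ∩ sphere 0 1) := by
  have hρ : 0 < δ / 2 := half_pos hδ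
  have hsummable : Summable fun n => a n * ((δ / 2 : ℝ) : ℂ) ^ n := by
    have hmem : |t₀ + δ / 2 - t₀| < δ := by
      rw [add_sub_cancel_left, abs_of_pos hρ]; linarith
    simpa using (ha _ hmem).summable
  obtain ⟨V, hV, hz₀, hdiff, hmaps⟩ := exists_isOpen_differentiableOn_angleBranch t₀ hρ
  have hg := differentiableOn_tsum_mul_sub_pow hsummable (t₀ : ℂ)
  rw [norm_real, Real.norm_of_nonneg hρ.le] at hg
  refine ⟨V, hV, hz₀, _ ∘ angleBranch t₀, hg.comp hdiff hmaps, ?_⟩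
  rintro z ⟨hzV, hz⟩
  obtain ⟨t, hzt, rfl⟩ := exists_ofReal_eq_angleBranch t₀ (by simpa using hz)
  have ht : |t - t₀| < δ := by
    have := hmaps hzV
    rw [hzt, mem_ball, dist_eq, ← ofReal_sub, norm_real, Real.norm_eq_abs] at this
    linarith
  simp only [Function.comp_apply, hzt, (ha t ht).tsum_eq]

theorem exists_hasSum_of_differentiableOn_eqOn_sphere {f F : ℂ → ℂ} {t₀ : ℝ} {V : Set ℂ}
    (hV : IsOpen V) (hz₀ : exp (t₀ * I) ∈ V) (hF : DifferentiableOn ℂ F V)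
    (hFf : EqOn F f (V ∩ sphere 0 1)) :
    ∃ a : ℕ → ℂ, ∃ δ > (0 : ℝ), ∀ t : ℝ, |t - t₀| < δ →
      HasSum (fun n => a n * ((t : ℂ) - t₀) ^ n) (f (exp (t * I))) := by
  have hG : AnalyticAt ℂ (fun z : ℂ => F (exp (z * I))) t₀ :=
    (hF.analyticAt (hV.mem_nhds hz₀)).comp_of_eq
      (analyticAt_cexp.comp (analyticAt_id.mul analyticAt_const)) rfl
  obtain ⟨a, ha⟩ := hG.exists_eventually_hasSum_mul_sub_pow
  have hcircle : ∀ᶠ t : ℝ in 𝓝 t₀, exp (t * I) ∈ V :=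
    (by fun_prop : Continuous fun t : ℝ => exp (t * I)).continuousAt.preimage_mem_nhds
      (hV.mem_nhds hz₀)
  obtain ⟨δ, hδ, hnear⟩ :=
    Metric.eventually_nhds_iff.mp (((continuous_ofReal.tendsto t₀).eventually ha).and hcircle)
  refine ⟨a, δ, hδ, fun t ht => ?_⟩
  obtain ⟨hsum, htV⟩ := hnear (by rwa [Real.dist_eq])
  rwa [hFf ⟨htV, by simp⟩] at hsum

/-- A function `f` on the unit circle is real analytic at `e^{it₀}`
(it agrees near `t₀` with a convergent power series in `t - t₀`) iff it is extendable
at `e^{it₀}` (it agrees with a holomorphic function on an open neighbourhood `V` of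
`e^{it₀}` on `V ∩ T`). -/
theorem stmt14 (f : ℂ → ℂ) (t₀ : ℝ) :
    (∃ a : ℕ → ℂ, ∃ δ > (0 : ℝ), ∀ t : ℝ, |t - t₀| < δ →
        HasSum (fun n : ℕ => a n * ((t : ℂ) - (t₀ : ℂ)) ^ n)
          (f (Complex.exp (t * Complex.I)))) ↔
      (∃ V : Set ℂ, IsOpen V ∧ Complex.exp (t₀ * Complex.I) ∈ V ∧
        ∃ F : ℂ → ℂ, DifferentiableOn ℂ F V ∧
          Set.EqOn F f (V ∩ sphere (0 : ℂ) 1)) :=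
  ⟨fun ⟨_, _, hδ, ha⟩ => exists_differentiableOn_eqOn_sphere_of_hasSum hδ ha,
    fun ⟨_, hV, hz₀, _, hF, hFf⟩ => exists_hasSum_of_differentiableOn_eqOn_sphere hV hz₀ hF hFf⟩
end

section
/- Fix t₀ ∈ (0,1), r > 0, and M > 0. The set A of continuous functions f : [0,1] → ℂ for which there exists a holomorphic function F on the disk D(t₀, r) with |F| ≤ M on D(t₀, r) and F = f on D(t₀, r) ∩ [0,1] is a closed subset of C([0,1]) with the uniform norm. -/
/-!
By the Cauchy estimate, holomorphic functions bounded by `M` on an open set are uniformly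
Lipschitz near each of its points, hence form an equicontinuous family. Along an ultrafilter
finer than `atTop`, extensions `Fₙ` of the approximating functions then converge pointwise (the
closed ball of radius `M` is compact), hence locally uniformly by Arzelà–Ascoli, to a holomorphic
function bounded by `M`; on the real segment its values are the limits `f t`.
-/

open Complex Metric Set Filter Topology

lemma norm_sub_le_of_differentiableOn_ball {G : ℂ → ℂ} {x : ℂ} {δ M : ℝ} (hδ : 0 < δ)
    (hd : DifferentiableOn ℂ G (ball x (2 * δ))) (hb : ∀ z ∈ ball x (2 * δ), ‖G z‖ ≤ M)
    {y w : ℂ} (hy : y ∈ ball x δ) (hw : w ∈ ball x δ) :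
    ‖G y - G w‖ ≤ M / δ * ‖y - w‖ := by
  have hsub : ∀ v ∈ ball x δ, closedBall v δ ⊆ ball x (2 * δ) := fun v hv =>
    closedBall_subset_ball' (by rw [mem_ball] at hv; linarith)
  have hderiv : ∀ v ∈ ball x δ, ‖deriv G v‖ ≤ M / δ := fun v hv =>
    norm_deriv_le_of_forall_mem_sphere_norm_le hδ ((hd.mono (hsub v hv)).diffContOnCl_ball le_rfl)
      fun z hz => hb z (hsub v hv (sphere_subset_closedBall hz))
  have hdiff : ∀ v ∈ ball x δ, DifferentiableAt ℂ G v := fun v hv =>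
    hd.differentiableAt (isOpen_ball.mem_nhds (ball_subset_ball (by linarith) hv))
  exact (convex_ball x δ).norm_image_sub_le_of_norm_deriv_le hdiff hderiv hw hy

lemma equicontinuousAt_of_differentiableOn_of_norm_le {ι : Type*} {F : ι → ℂ → ℂ} {U : Set ℂ}
    {M : ℝ} (hU : IsOpen U) (hd : ∀ i, DifferentiableOn ℂ (F i) U)
    (hb : ∀ i, ∀ z ∈ U, ‖F i z‖ ≤ M) {x : ℂ} (hx : x ∈ U) : EquicontinuousAt F x := by
  obtain ⟨ρ, hρ, hρU⟩ := Metric.isOpen_iff.mp hU x hx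
  have hδ : 0 < ρ / 2 := half_pos hρ
  have hball : ball x (2 * (ρ / 2)) ⊆ U := by rwa [mul_div_cancel₀ _ two_ne_zero]
  refine equicontinuousAt_of_continuity_modulus (fun y => M / (ρ / 2) * dist x y) ?_ F ?_
  · exact (continuous_const.mul (continuous_const.dist continuous_id)).tendsto' x 0 (by simp)
  · filter_upwards [ball_mem_nhds x hδ] with y hy i
    rw [dist_eq_norm, dist_eq_norm]
    exact norm_sub_le_of_differentiableOn_ball hδ ((hd i).mono hball)
      (fun z hz => hb i z (hball hz)) (mem_ball_self hδ) hy

lemma tendstoLocallyUniformlyOn_of_equicontinuousAt {ι X α : Type*} [TopologicalSpace X]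
    [LocallyCompactSpace X] [UniformSpace α] {F : ι → X → α} {f : X → α} {p : Filter ι}
    {U : Set X} (hU : IsOpen U) (hF : ∀ x ∈ U, EquicontinuousAt F x)
    (hf : ∀ x ∈ U, Tendsto (fun i => F i x) p (𝓝 (f x))) :
    TendstoLocallyUniformlyOn F f p U := by
  rw [tendstoLocallyUniformlyOn_iff_forall_isCompact hU]
  intro K hKU hK
  have hKeq : EquicontinuousOn F K := fun x hx => (hF x (hKU hx)).equicontinuousWithinAt K
  have := (EquicontinuousOn.tendsto_uniformOnFun_iff_pi' (𝔖 := {K}) (by simpa using hK)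
    (by simpa using hKeq) p f).mpr ?_
  · exact (UniformOnFun.tendsto_iff_tendstoUniformlyOn.mp this) K rfl
  · rw [sUnion_singleton, tendsto_pi_nhds]
    exact fun x => hf x (hKU x.2)

lemma IsCompact.tendsto_limUnder_of_forall_mem {ι X : Type*} [TopologicalSpace X] [T2Space X]
    [Nonempty X] {K : Set X} (hK : IsCompact K) (u : Ultrafilter ι) {g : ι → X}
    (hg : ∀ i, g i ∈ K) : Tendsto g u (𝓝 (limUnder u g)) := by
  obtain ⟨a, -, ha⟩ := hK.ultrafilter_le_nhds (u.map g)
    (le_principal_iff.mpr (mem_map.mpr (univ_mem' hg)))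
  have hga : Tendsto g u (𝓝 a) := ha
  rwa [hga.limUnder_eq]

lemma tendstoLocallyUniformlyOn_limUnder_of_norm_le {ι : Type*}
    {F : ι → ℂ → ℂ} {U : Set ℂ} {M : ℝ} (hU : IsOpen U) (hd : ∀ i, DifferentiableOn ℂ (F i) U)
    (hb : ∀ i, ∀ z ∈ U, ‖F i z‖ ≤ M) (u : Ultrafilter ι) :
    TendstoLocallyUniformlyOn F (fun z => limUnder u (F · z)) u U :=
  tendstoLocallyUniformlyOn_of_equicontinuousAt hU
    (fun _ hx => equicontinuousAt_of_differentiableOn_of_norm_le hU hd hb hx)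
    fun z hz => (isCompact_closedBall 0 M).tendsto_limUnder_of_forall_mem u
      fun i => mem_closedBall_zero_iff.mpr (hb i z hz)

theorem stmt16_general (t₀ r M : ℝ) :
    IsClosed {f : C(Set.Icc (0 : ℝ) 1, ℂ) | ∃ F : ℂ → ℂ,
      DifferentiableOn ℂ F (ball (t₀ : ℂ) r) ∧
      (∀ z ∈ ball (t₀ : ℂ) r, ‖F z‖ ≤ M) ∧
      ∀ t : Set.Icc (0 : ℝ) 1, ((t : ℝ) : ℂ) ∈ ball (t₀ : ℂ) r →
        F ((t : ℝ) : ℂ) = f t} := by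
  rw [← isSeqClosed_iff_isClosed]
  intro g f hg hgf
  choose G hGd hGb hGeq using hg
  set u := Ultrafilter.of (atTop : Filter ℕ)
  have hlim := tendstoLocallyUniformlyOn_limUnder_of_norm_le isOpen_ball hGd hGb u
  refine ⟨_, hlim.differentiableOn (.of_forall hGd) isOpen_ball, fun z hz => ?_, fun t ht => ?_⟩
  · exact le_of_tendsto (hlim.tendsto_at hz).norm (.of_forall fun n => hGb n z hz)
  · have hgt : Tendsto (fun n => g n t) u (𝓝 (f t)) :=
      (((continuous_eval_const t).tendsto f).comp hgf).mono_left (Ultrafilter.of_le _)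
    refine tendsto_nhds_unique (hlim.tendsto_at ht) ?_
    simpa only [hGeq _ t ht] using hgt

/-- For fixed `t₀ ∈ (0,1)`, `r > 0`, `M > 0`, the set of continuous
functions `f : [0,1] → ℂ` admitting a holomorphic extension `F` on `D(t₀, r)` with
`|F| ≤ M` and `F = f` on `D(t₀, r) ∩ [0,1]` is closed in `C([0,1])` with the
uniform norm. -/
theorem stmt16 (t₀ r M : ℝ) (ht₀ : t₀ ∈ Set.Ioo (0 : ℝ) 1) (hr : 0 < r) (hM : 0 < M) :
    IsClosed {f : C(Set.Icc (0 : ℝ) 1, ℂ) | ∃ F : ℂ → ℂ,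
      DifferentiableOn ℂ F (ball (t₀ : ℂ) r) ∧
      (∀ z ∈ ball (t₀ : ℂ) r, ‖F z‖ ≤ M) ∧
      ∀ t : Set.Icc (0 : ℝ) 1, ((t : ℝ) : ℂ) ∈ ball (t₀ : ℂ) r →
        F ((t : ℝ) : ℂ) = f t} :=
  stmt16_general t₀ r M
end

section
/- Fix t₀ ∈ (0,1), r > 0, and M > 0. The set A of continuous functions f : [0,1] → ℂ admitting a holomorphic extension F on D(t₀, r) bounded by M (i.e., F holomorphic on D(t₀, r), |F| ≤ M, F = f on D(t₀, r) ∩ [0,1]) has empty interior in C([0,1]) with the uniform norm. -/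
/-!
If `f` were an interior point, then so would be `g = f + c / (t - z₀)` for a small `c ≠ 0` and a
non-real `z₀` in the disc. Subtracting the extensions of `f` and `g` gives a holomorphic `H` on the
disc with `H t = c / (t - z₀)` for real `t` near `t₀`; by the identity theorem
`(z - z₀) H z - c` vanishes on the whole disc, which is absurd at `z = z₀`.
-/

open Complex Metric Set Filter Topology

namespace Complex

theorem tendsto_ofReal_nhdsNE (x : ℝ) : Tendsto ofReal (𝓝[≠] x) (𝓝[≠] (x : ℂ)) :=
  continuous_ofReal.continuousWithinAt.tendsto_nhdsWithin fun _ _ => by simp_all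

theorem ofReal_sub_ne_zero {z : ℂ} (hz : z.im ≠ 0) (t : ℝ) : (t : ℂ) - z ≠ 0 := fun h =>
  hz (by simpa using congrArg im h)

theorem norm_inv_ofReal_sub_le {z : ℂ} (hz : z.im ≠ 0) (t : ℝ) :
    ‖((t : ℂ) - z)⁻¹‖ ≤ |z.im|⁻¹ := by
  rw [norm_inv]
  refine inv_anti₀ (abs_pos.2 hz) ?_
  simpa using abs_im_le_norm ((t : ℂ) - z)

end Complex

theorem DifferentiableOn.eqOn_zero_of_eventually_ofReal_eq_zero {U : Set ℂ} {K : ℂ → ℂ}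
    (hK : DifferentiableOn ℂ K U) (hU : IsOpen U) (hUc : IsPreconnected U) {x : ℝ}
    (hx : (x : ℂ) ∈ U) (h : ∀ᶠ t : ℝ in 𝓝 x, K t = 0) : EqOn K 0 U :=
  (hK.analyticOnNhd hU).eqOn_zero_of_preconnected_of_frequently_eq_zero hUc hx <|
    (tendsto_ofReal_nhdsNE x).frequently (h.filter_mono nhdsWithin_le_nhds).frequently

theorem DifferentiableOn.not_eventually_ofReal_eq_div_sub {U : Set ℂ} {H : ℂ → ℂ}
    (hH : DifferentiableOn ℂ H U) (hU : IsOpen U) (hUc : IsPreconnected U) {x : ℝ}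
    (hx : (x : ℂ) ∈ U) {z₀ : ℂ} (hz₀U : z₀ ∈ U) (hz₀ : z₀.im ≠ 0) {c : ℂ} (hc : c ≠ 0) :
    ¬ ∀ᶠ t : ℝ in 𝓝 x, H t = c / (t - z₀) := fun h => by
  have hK : DifferentiableOn ℂ (fun z => (z - z₀) * H z - c) U := by fun_prop
  have hK_zero := hK.eqOn_zero_of_eventually_ofReal_eq_zero hU hUc hx <| h.mono fun t ht => by
    rw [ht, mul_div_cancel₀ _ (ofReal_sub_ne_zero hz₀ t), sub_self]
  simpa [hc] using hK_zero hz₀U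

namespace ContinuousMap

noncomputable def invOfRealSub (s : Set ℝ) {z : ℂ} (hz : z.im ≠ 0) : C(s, ℂ) :=
  ⟨fun t => ((t : ℝ) - z)⁻¹,
    ((continuous_ofReal.comp continuous_subtype_val).sub continuous_const).inv₀
      fun t => ofReal_sub_ne_zero hz t⟩

theorem norm_invOfRealSub_le (s : Set ℝ) [CompactSpace s] {z : ℂ} (hz : z.im ≠ 0) :
    ‖invOfRealSub s hz‖ ≤ |z.im|⁻¹ :=
  (norm_le _ (by positivity)).2 fun t => norm_inv_ofReal_sub_le hz t

theorem exists_ne_zero_norm_smul_invOfRealSub_lt (s : Set ℝ) [CompactSpace s] {z : ℂ}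
    (hz : z.im ≠ 0) {ε : ℝ} (hε : 0 < ε) : ∃ c : ℂ, c ≠ 0 ∧ ‖c • invOfRealSub s hz‖ < ε := by
  have hz' : 0 < |z.im| := abs_pos.2 hz
  refine ⟨(ε * |z.im| / 2 : ℝ), ofReal_ne_zero.2 (by positivity), ?_⟩
  calc ‖((ε * |z.im| / 2 : ℝ) : ℂ) • invOfRealSub s hz‖
      = ε * |z.im| / 2 * ‖invOfRealSub s hz‖ := by
        rw [norm_smul, norm_real, Real.norm_of_nonneg (by positivity)]
    _ ≤ ε * |z.im| / 2 * |z.im|⁻¹ := by gcongr; exact norm_invOfRealSub_le s hz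
    _ = ε / 2 := by field_simp
    _ < ε := half_lt_self hε

end ContinuousMap

theorem stmt17_general (t₀ r M : ℝ) (ht₀ : t₀ ∈ Set.Ioo (0 : ℝ) 1) (hr : 0 < r) :
    interior {f : C(Set.Icc (0 : ℝ) 1, ℂ) | ∃ F : ℂ → ℂ,
      DifferentiableOn ℂ F (ball (t₀ : ℂ) r) ∧
      (∀ z ∈ ball (t₀ : ℂ) r, ‖F z‖ ≤ M) ∧
      ∀ t : Set.Icc (0 : ℝ) 1, ((t : ℝ) : ℂ) ∈ ball (t₀ : ℂ) r →
        F ((t : ℝ) : ℂ) = f t} = ∅ := by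
  refine eq_empty_iff_forall_notMem.2 fun f hf => ?_
  obtain ⟨ε, hε, hball⟩ := Metric.isOpen_iff.1 isOpen_interior f hf
  set z₀ : ℂ := t₀ + (r / 2 : ℝ) * I
  have hz₀ : z₀.im ≠ 0 := by simpa [z₀] using hr.ne'
  have hz₀U : z₀ ∈ ball (t₀ : ℂ) r := by
    simpa [z₀, abs_of_pos hr] using half_lt_self hr
  obtain ⟨c, hc, hck⟩ :=
    ContinuousMap.exists_ne_zero_norm_smul_invOfRealSub_lt (Icc (0 : ℝ) 1) hz₀ hε
  have hg : f + c • ContinuousMap.invOfRealSub _ hz₀ ∈ ball f ε := by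
    rwa [mem_ball, dist_eq_norm, add_sub_cancel_left]
  obtain ⟨F, hF, -, hFf⟩ := interior_subset hf
  obtain ⟨G, hG, -, hGg⟩ := interior_subset (hball hg)
  refine (hG.sub hF).not_eventually_ofReal_eq_div_sub isOpen_ball
    (convex_ball _ _).isPreconnected (mem_ball_self hr) hz₀U hz₀ hc ?_
  filter_upwards [Icc_mem_nhds ht₀.1 ht₀.2,
    continuous_ofReal.continuousAt.preimage_mem_nhds (isOpen_ball.mem_nhds (mem_ball_self hr))]
    with t ht htU
  rw [Pi.sub_apply, hGg ⟨t, ht⟩ htU, hFf ⟨t, ht⟩ htU]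
  simp [ContinuousMap.invOfRealSub, div_eq_mul_inv]

/-- For fixed `t₀ ∈ (0,1)`, `r > 0`, `M > 0`, the set of continuous
functions `f : [0,1] → ℂ` admitting a holomorphic extension `F` on `D(t₀, r)` bounded
by `M` (with `F = f` on `D(t₀, r) ∩ [0,1]`) has empty interior in `C([0,1])`. -/
theorem stmt17 (t₀ r M : ℝ) (ht₀ : t₀ ∈ Set.Ioo (0 : ℝ) 1) (hr : 0 < r) (hM : 0 < M) :
    interior {f : C(Set.Icc (0 : ℝ) 1, ℂ) | ∃ F : ℂ → ℂ,
      DifferentiableOn ℂ F (ball (t₀ : ℂ) r) ∧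
      (∀ z ∈ ball (t₀ : ℂ) r, ‖F z‖ ≤ M) ∧
      ∀ t : Set.Icc (0 : ℝ) 1, ((t : ℝ) : ℂ) ∈ ball (t₀ : ℂ) r →
        F ((t : ℝ) : ℂ) = f t} = ∅ :=
  stmt17_general t₀ r M ht₀ hr
end

section
/- The set of continuous functions f : [0,1] → ℂ that are nowhere holomorphically extendable — i.e., there exist no point t₀ ∈ [0,1], radius r > 0, and holomorphic function F : D(t₀, r) → ℂ with F = f on D(t₀, r) ∩ [0,1] — is a dense Gδ subset of C([0,1]) with the uniform norm. -/
/-!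
Let `E(c, r, M)` be the set of functions extending holomorphically to `D(c, r)` with bound `M`
there. Cauchy's estimates bound the Taylor coefficients at `c` of such extensions by
`M (r/2)^{-j}`, so along a uniformly convergent sequence in `E(c, r, M)` a subsequence of the
coefficients converges, and the limit series shows `closure E(c, r, M) ⊆ E(c, r/4, 2M)`.
A bounded extension has a bounded derivative, so all functions in this closure are Lipschitz
near `c` with a common constant; a small Urysohn bump then leaves the closure, which therefore
has empty interior. The somewhere extendable functions are the union of these closures over a
dense sequence of centres, radii `1/(n+1)` and integer bounds, and Baire's theorem concludes.
-/

open Complex Metric Set Filter Topology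

def boundedExtendable (c r M : ℝ) : Set C(Icc (0 : ℝ) 1, ℂ) :=
  {f | ∃ F : ℂ → ℂ, DifferentiableOn ℂ F (ball (c : ℂ) r) ∧ (∀ z ∈ ball (c : ℂ) r, ‖F z‖ ≤ M) ∧
    ∀ t : Icc (0 : ℝ) 1, ((t : ℝ) : ℂ) ∈ ball (c : ℂ) r → F ((t : ℝ) : ℂ) = f t}

def somewhereExtendable : Set C(Icc (0 : ℝ) 1, ℂ) :=
  {f | ∃ t₀ ∈ Icc (0 : ℝ) 1, ∃ r > (0 : ℝ), ∃ F : ℂ → ℂ, DifferentiableOn ℂ F (ball (t₀ : ℂ) r) ∧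
    ∀ t : Icc (0 : ℝ) 1, ((t : ℝ) : ℂ) ∈ ball (t₀ : ℂ) r → F ((t : ℝ) : ℂ) = f t}

lemma hasSum_inv_factorial_mul_iteratedDeriv_mul_pow {F : ℂ → ℂ} {c z : ℂ} {r : ℝ}
    (hF : DifferentiableOn ℂ F (ball c r)) (hz : z ∈ ball c r) :
    HasSum (fun j ↦ (j.factorial : ℂ)⁻¹ * iteratedDeriv j F c * (z - c) ^ j) (F z) := by
  simpa only [smul_eq_mul, mul_comm, mul_left_comm, mul_assoc] using
    Complex.hasSum_taylorSeries_on_ball hF hz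

lemma norm_inv_factorial_mul_iteratedDeriv_le {F : ℂ → ℂ} {c : ℂ} {r R M : ℝ}
    (hF : DifferentiableOn ℂ F (ball c r)) (hFM : ∀ z ∈ ball c r, ‖F z‖ ≤ M) (hR : 0 < R)
    (hRr : R < r) (j : ℕ) :
    ‖(j.factorial : ℂ)⁻¹ * iteratedDeriv j F c‖ ≤ M / R ^ j := by
  have hsub : closedBall c R ⊆ ball c r := closedBall_subset_ball hRr
  have hcauchy := norm_iteratedDeriv_le_of_forall_mem_sphere_norm_le j hR
    (hF.diffContOnCl_ball hsub) fun z hz ↦ hFM z (hsub (sphere_subset_closedBall hz))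
  rw [norm_mul, norm_inv, Complex.norm_natCast, inv_mul_le_iff₀ (by positivity), ← mul_div_assoc]
  exact hcauchy

lemma norm_mul_pow_le_of_norm_le {a w : ℂ} {M R : ℝ} {j : ℕ} (hR : 0 < R)
    (ha : ‖a‖ ≤ M / R ^ j) (hw : ‖w‖ ≤ R / 2) : ‖a * w ^ j‖ ≤ M * (1 / 2) ^ j :=
  calc ‖a * w ^ j‖ = ‖a‖ * ‖w‖ ^ j := by rw [norm_mul, norm_pow]
    _ ≤ M / R ^ j * (R / 2) ^ j := by gcongr; exact (norm_nonneg a).trans ha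
    _ = M * (1 / 2) ^ j := by rw [div_pow, one_div_pow]; field_simp

lemma exists_subseq_tendsto_of_norm_le {E : Type*} [NormedAddCommGroup E] [ProperSpace E]
    {A : ℕ → ℕ → E} {B : ℕ → ℝ} (hA : ∀ k j, ‖A k j‖ ≤ B j) :
    ∃ a : ℕ → E, (∀ j, ‖a j‖ ≤ B j) ∧
      ∃ φ : ℕ → ℕ, StrictMono φ ∧ ∀ j, Tendsto (fun k ↦ A (φ k) j) atTop (𝓝 (a j)) := by
  have hmem : ∀ k, A k ∈ univ.pi fun j ↦ closedBall (0 : E) (B j) := fun k j _ ↦ by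
    simpa using hA k j
  obtain ⟨a, ha, φ, hφ, hlim⟩ :=
    (isCompact_univ_pi fun j ↦ isCompact_closedBall (0 : E) (B j)).isSeqCompact hmem
  exact ⟨a, fun j ↦ by simpa using ha j (mem_univ j), φ, hφ, tendsto_pi_nhds.mp hlim⟩

lemma closure_boundedExtendable_subset {c r M : ℝ} (hr : 0 < r) :
    closure (boundedExtendable c r M) ⊆ boundedExtendable c (r / 4) (2 * M) := by
  intro g hg
  obtain ⟨f, hf, hfg⟩ := mem_closure_iff_seq_limit.mp hg
  choose F hFd hFM hFf using hf
  set A : ℕ → ℕ → ℂ := fun k j ↦ (j.factorial : ℂ)⁻¹ * iteratedDeriv j (F k) c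
  have hA : ∀ k j, ‖A k j‖ ≤ M / (r / 2) ^ j := fun k j ↦
    norm_inv_factorial_mul_iteratedDeriv_le (hFd k) (hFM k) (by positivity) (by linarith) j
  obtain ⟨a, ha, φ, hφ, hAa⟩ := exists_subseq_tendsto_of_norm_le hA
  have hterm : ∀ {b : ℕ → ℂ}, (∀ j, ‖b j‖ ≤ M / (r / 2) ^ j) →
      ∀ z ∈ ball (c : ℂ) (r / 4), ∀ j, ‖b j * (z - c) ^ j‖ ≤ M * (1 / 2) ^ j :=
    fun hb z hz j ↦ norm_mul_pow_le_of_norm_le (by positivity) (hb j)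
      (by rw [← dist_eq_norm]; linarith [mem_ball.mp hz])
  have hsum := summable_geometric_two.mul_left M
  refine ⟨fun z ↦ ∑' j, a j * (z - c) ^ j, ?_, fun z hz ↦ ?_, fun t ht ↦ ?_⟩
  · exact differentiableOn_tsum_of_summable_norm hsum (fun j ↦ by fun_prop) isOpen_ball
      (fun j z hz ↦ hterm ha z hz j)
  · calc ‖∑' j, a j * (z - c) ^ j‖ ≤ ∑' j, M * (1 / 2 : ℝ) ^ j :=
          tsum_of_norm_bounded hsum.hasSum (hterm ha z hz)
      _ = 2 * M := by rw [tsum_mul_left, tsum_geometric_two, mul_comm]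
  · have ht' : ((t : ℝ) : ℂ) ∈ ball (c : ℂ) r := ball_subset_ball (by linarith) ht
    have hF_lim : Tendsto (fun k ↦ F (φ k) t) atTop (𝓝 (∑' j, a j * (t - c) ^ j)) :=
      (tendsto_tsum_of_dominated_convergence hsum (fun j ↦ (hAa j).mul_const _)
        (.of_forall fun k ↦ hterm (hA (φ k)) t ht)).congr fun k ↦
          (hasSum_inv_factorial_mul_iteratedDeriv_mul_pow (hFd (φ k)) ht').tsum_eq
    have hf_lim : Tendsto (fun k ↦ F (φ k) t) atTop (𝓝 (g t)) :=
      (((continuous_eval_const t).tendsto g).comp (hfg.comp hφ.tendsto_atTop)).congr fun k ↦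
        (hFf (φ k) t ht').symm
    exact tendsto_nhds_unique hF_lim hf_lim

lemma norm_sub_le_of_mem_boundedExtendable {c r M : ℝ} {f : C(Icc (0 : ℝ) 1, ℂ)}
    (hf : f ∈ boundedExtendable c r M) (hr : 0 < r) {s t : Icc (0 : ℝ) 1}
    (hs : dist (s : ℝ) c < r / 2) (ht : dist (t : ℝ) c < r / 2) :
    ‖f s - f t‖ ≤ 2 * M / r * dist s t := by
  obtain ⟨F, hFd, hFM, hFf⟩ := hf
  have hmem : ∀ {u : ℝ}, dist u c < r / 2 → (u : ℂ) ∈ ball (c : ℂ) (r / 2) := fun hu ↦ by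
    rwa [mem_ball, Complex.isometry_ofReal.dist_eq]
  have hderiv : ∀ z ∈ ball (c : ℂ) (r / 2), ‖deriv F z‖ ≤ M / (r / 2) := fun z hz ↦ by
    have hsub : closedBall z (r / 2) ⊆ ball (c : ℂ) r := fun w hw ↦ by
      rw [mem_ball] at hz ⊢
      linarith [dist_triangle w z c, mem_closedBall.mp hw]
    exact norm_deriv_le_of_forall_mem_sphere_norm_le (by positivity) (hFd.diffContOnCl_ball hsub)
      fun w hw ↦ hFM w (hsub (sphere_subset_closedBall hw))
  have hlip := (convex_ball (c : ℂ) (r / 2)).norm_image_sub_le_of_norm_deriv_le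
    (fun z hz ↦ hFd.differentiableAt (isOpen_ball.mem_nhds (ball_subset_ball (by linarith) hz)))
    hderiv (hmem ht) (hmem hs)
  calc ‖f s - f t‖ = ‖F s - F t‖ := by
        rw [hFf s (ball_subset_ball (by linarith) (hmem hs)),
          hFf t (ball_subset_ball (by linarith) (hmem ht))]
    _ ≤ M / (r / 2) * ‖(s : ℂ) - t‖ := hlip
    _ = 2 * M / r * dist s t := by
        rw [← dist_eq_norm, Complex.isometry_ofReal.dist_eq, Subtype.dist_eq]
        ring

lemma interior_eq_empty_of_forall_exists_norm_sub_le {X : Type*} [TopologicalSpace X]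
    [CompactSpace X] [T2Space X] {S : Set C(X, ℂ)}
    (hS : ∀ δ > 0, ∃ x y, x ≠ y ∧ ∀ f ∈ S, ‖f x - f y‖ ≤ δ) : interior S = ∅ := by
  refine eq_empty_of_forall_notMem fun f hf ↦ ?_
  obtain ⟨ε, hε, hball⟩ := Metric.mem_nhds_iff.mp (mem_interior_iff_mem_nhds.mp hf)
  obtain ⟨x, y, hxy, hS⟩ := hS (ε / 8) (by positivity)
  obtain ⟨h, hx, hy, hh⟩ := exists_continuous_zero_one_of_isClosed isClosed_singleton
    isClosed_singleton (disjoint_singleton.mpr hxy)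
  set e : C(X, ℂ) := (ContinuousMap.mk ((↑) : ℝ → ℂ) continuous_ofReal).comp h
  have he : ‖e‖ ≤ 1 := (ContinuousMap.norm_le e zero_le_one).mpr fun z ↦ by
    simp [e, abs_of_nonneg (hh z).1, (hh z).2]
  set g := f + (ε / 2 : ℂ) • e
  have hg : g ∈ S := hball <| by
    rw [mem_ball, dist_eq_norm, add_sub_cancel_left, norm_smul]
    calc ‖(ε / 2 : ℂ)‖ * ‖e‖ ≤ ε / 2 * 1 := by
          gcongr
          simp [abs_of_pos hε]
      _ < ε := by linarith
  have hgf : ‖(g x - g y) - (f x - f y)‖ = ε / 2 := by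
    simp [g, e, hx rfl, hy rfl, hε.le]
  linarith [norm_sub_le (g x - g y) (f x - f y), hS g hg, hS f (hball (mem_ball_self hε))]

lemma interior_closure_boundedExtendable_eq_empty {c r M : ℝ} (hc : c ∈ Icc (0 : ℝ) 1)
    (hr : 0 < r) : interior (closure (boundedExtendable c r M)) = ∅ := by
  refine interior_eq_empty_of_forall_exists_norm_sub_le fun δ hδ ↦ ?_
  set L := 2 * (2 * M) / (r / 4)
  set η := min (r / 16) (min (1 / 2) (δ / (|L| + 1)))
  have hη : 0 < η := by positivity
  have hηL : L * η ≤ δ := calc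
    L * η ≤ (|L| + 1) * (δ / (|L| + 1)) := by
      gcongr
      · linarith [le_abs_self L]
      · exact (min_le_right _ _).trans (min_le_right _ _)
    _ = δ := by field_simp
  obtain ⟨y, hy, hyc⟩ : ∃ y ∈ Icc (0 : ℝ) 1, dist y c = η := by
    have hη1 : η ≤ 1 / 2 := (min_le_right _ _).trans (min_le_left _ _)
    rcases le_total c (1 / 2) with hc2 | hc2
    · exact ⟨c + η, ⟨by linarith [hc.1], by linarith⟩, by simp [hη.le]⟩
    · exact ⟨c - η, ⟨by linarith, by linarith [hc.2]⟩, by simp [abs_of_pos hη]⟩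
  refine ⟨⟨y, hy⟩, ⟨c, hc⟩, fun h ↦ dist_pos.mp (hyc ▸ hη) (congrArg Subtype.val h), fun f hf ↦ ?_⟩
  have hηr : η < r / 4 / 2 := by linarith [min_le_left (r / 16) (min (1 / 2) (δ / (|L| + 1)))]
  calc ‖f ⟨y, hy⟩ - f ⟨c, hc⟩‖ ≤ L * dist (⟨y, hy⟩ : Icc (0 : ℝ) 1) ⟨c, hc⟩ :=
        norm_sub_le_of_mem_boundedExtendable (closure_boundedExtendable_subset hr hf)
          (by positivity) (by rwa [hyc]) (by rw [dist_self]; positivity)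
    _ = L * η := by rw [Subtype.dist_eq, hyc]
    _ ≤ δ := hηL

lemma exists_mem_boundedExtendable {f : C(Icc (0 : ℝ) 1, ℂ)} {F : ℂ → ℂ} {t₀ r c ρ : ℝ}
    (hF : DifferentiableOn ℂ F (ball (t₀ : ℂ) r))
    (hFf : ∀ t : Icc (0 : ℝ) 1, ((t : ℝ) : ℂ) ∈ ball (t₀ : ℂ) r → F ((t : ℝ) : ℂ) = f t)
    (hsub : closedBall (c : ℂ) ρ ⊆ ball (t₀ : ℂ) r) :
    ∃ M : ℕ, f ∈ boundedExtendable c ρ M := by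
  obtain ⟨C, hC⟩ := (isCompact_closedBall (c : ℂ) ρ).exists_bound_of_continuousOn
    (hF.continuousOn.mono hsub)
  exact ⟨⌈C⌉₊, F, hF.mono (ball_subset_closedBall.trans hsub),
    fun z hz ↦ (hC z (ball_subset_closedBall hz)).trans (Nat.le_ceil C),
    fun t ht ↦ hFf t (hsub (ball_subset_closedBall ht))⟩

lemma somewhereExtendable_eq_iUnion {u : ℕ → Icc (0 : ℝ) 1} (hu : DenseRange u) :
    somewhereExtendable =
      ⋃ i : ℕ × ℕ × ℕ, closure (boundedExtendable (u i.1) (1 / (i.2.1 + 1)) i.2.2) := by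
  ext f
  simp only [mem_iUnion]
  constructor
  · rintro ⟨t₀, ht₀, r, hr, F, hF, hFf⟩
    obtain ⟨n, hn⟩ := exists_nat_one_div_lt (half_pos hr)
    obtain ⟨l, hl⟩ := hu.exists_dist_lt ⟨t₀, ht₀⟩ (ε := 1 / (n + 1 : ℝ)) (by positivity)
    have hsub : closedBall ((u l : ℝ) : ℂ) (1 / (n + 1)) ⊆ ball (t₀ : ℂ) r := fun z hz ↦ by
      rw [Subtype.dist_eq, ← Complex.isometry_ofReal.dist_eq] at hl
      rw [mem_ball]
      linarith [dist_triangle z (u l : ℂ) t₀, mem_closedBall.mp hz, dist_comm (t₀ : ℂ) (u l : ℂ)]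
    obtain ⟨M, hM⟩ := exists_mem_boundedExtendable hF hFf hsub
    exact ⟨(l, n, M), subset_closure hM⟩
  · rintro ⟨⟨l, n, M⟩, hf⟩
    obtain ⟨F, hF, -, hFf⟩ := closure_boundedExtendable_subset (by positivity) hf
    exact ⟨u l, (u l).2, 1 / (n + 1) / 4, by positivity, F, hF, hFf⟩

/-- The set of continuous functions `f : [0,1] → ℂ` that are nowhere
holomorphically extendable (no `t₀ ∈ [0,1]`, `r > 0`, and holomorphic
`F : D(t₀, r) → ℂ` with `F = f` on `D(t₀, r) ∩ [0,1]`) is a dense Gδ subset of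
`C([0,1])` with the uniform norm. -/
theorem stmt18 :
    IsGδ {f : C(Set.Icc (0 : ℝ) 1, ℂ) | ¬ ∃ t₀ ∈ Set.Icc (0 : ℝ) 1, ∃ r > (0 : ℝ),
        ∃ F : ℂ → ℂ, DifferentiableOn ℂ F (ball (t₀ : ℂ) r) ∧
          ∀ t : Set.Icc (0 : ℝ) 1, ((t : ℝ) : ℂ) ∈ ball (t₀ : ℂ) r →
            F ((t : ℝ) : ℂ) = f t} ∧
    Dense {f : C(Set.Icc (0 : ℝ) 1, ℂ) | ¬ ∃ t₀ ∈ Set.Icc (0 : ℝ) 1, ∃ r > (0 : ℝ),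
        ∃ F : ℂ → ℂ, DifferentiableOn ℂ F (ball (t₀ : ℂ) r) ∧
          ∀ t : Set.Icc (0 : ℝ) 1, ((t : ℝ) : ℂ) ∈ ball (t₀ : ℂ) r →
            F ((t : ℝ) : ℂ) = f t} := by
  obtain ⟨u, hu⟩ := TopologicalSpace.exists_dense_seq (Icc (0 : ℝ) 1)
  have hcompl : somewhereExtendableᶜ =
      ⋂ i : ℕ × ℕ × ℕ, (closure (boundedExtendable (u i.1) (1 / (i.2.1 + 1)) i.2.2))ᶜ := by
    rw [somewhereExtendable_eq_iUnion hu, compl_iUnion]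
  have hopen : ∀ i : ℕ × ℕ × ℕ,
      IsOpen (closure (boundedExtendable (u i.1) (1 / (i.2.1 + 1)) i.2.2))ᶜ :=
    fun _ ↦ isClosed_closure.isOpen_compl
  change IsGδ somewhereExtendableᶜ ∧ Dense somewhereExtendableᶜ
  rw [hcompl]
  refine ⟨.iInter fun i ↦ (hopen i).isGδ, dense_iInter_of_isOpen hopen fun i ↦ ?_⟩
  exact interior_eq_empty_iff_dense_compl.mp
    (interior_closure_boundedExtendable_eq_empty (u i.1).2 (by positivity))
end

section
/- Let γ : [0,1] → ℂ be an injective curve and t₀ ∈ (0,1). Suppose that for every function f defined near t₀ in ℝ: f is expandable as a convergent power series in (t - t₀) near t₀ if and only if f is expandable as f(t) = Σ b_n (γ(t) - γ(t₀))^n near t₀ for some complex power series with positive radius of convergence. Suppose moreover γ is C¹ near t₀. Then γ is analytic at t₀: there exist δ > 0, an open set V ⊆ ℂ containing (t₀-δ, t₀+δ), and an injective holomorphic function φ : V → ℂ with φ = γ on (t₀-δ, t₀+δ). -/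
/-!
Applying the hypothesis to `f = γ`, which is trivially a series in `γ t - γ t₀`, shows that `γ` is
real-analytic, so it extends to a holomorphic `φ` near `t₀`. Applying it to `f t = t` gives a
holomorphic `ψ` with `ψ (γ t) = t` for real `t` near `t₀`. By the identity theorem `ψ ∘ φ = id` on
a complex neighbourhood of `t₀`, so `φ` is injective there.
-/

open Complex Metric Set Filter Topology FormalMultilinearSeries

section PowerSeries

variable {𝕜 : Type*} [NontriviallyNormedField 𝕜]

def affineCoeffs (c₀ c₁ : 𝕜) (n : ℕ) : 𝕜 :=
  if n = 0 then c₀ else if n = 1 then c₁ else 0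

theorem hasSum_affineCoeffs_mul_pow (c₀ c₁ z : 𝕜) :
    HasSum (fun n => affineCoeffs c₀ c₁ n * z ^ n) (c₀ + c₁ * z) := by
  have h : HasSum (fun n => affineCoeffs c₀ c₁ n * z ^ n) _ :=
    hasSum_sum_of_ne_finset_zero (s := Finset.range 2) fun n hn => by
      simp only [Finset.mem_range, not_lt] at hn
      simp [affineCoeffs, show n ≠ 0 by omega, show n ≠ 1 by omega]
  simpa [Finset.sum_range_succ, affineCoeffs] using h

theorem le_radius_ofScalars_of_summable [CompleteSpace 𝕜] {c : ℕ → 𝕜} {z : 𝕜}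
    (h : Summable fun n => c n * z ^ n) : (‖z‖₊ : ENNReal) ≤ (ofScalars 𝕜 c).radius := by
  refine (ofScalars 𝕜 c).le_radius_of_tendsto (l := 0) ?_
  simpa [ofScalars_norm] using h.tendsto_atTop_zero.norm

theorem radius_ofScalars_pos_of_summable [CompleteSpace 𝕜] {c : ℕ → 𝕜} {z : 𝕜} (hz : z ≠ 0)
    (h : Summable fun n => c n * z ^ n) : 0 < (ofScalars 𝕜 c).radius :=
  lt_of_lt_of_le (by simpa using hz) (le_radius_ofScalars_of_summable h)

theorem hasSum_ofScalarsSum [CompleteSpace 𝕜] {c : ℕ → 𝕜} {z : 𝕜}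
    (hz : z ∈ eball (0 : 𝕜) (ofScalars 𝕜 c).radius) :
    HasSum (fun n => c n * z ^ n) (ofScalarsSum c z) := by
  have h := (ofScalars 𝕜 c).hasSum hz
  simp only [ofScalars_apply_eq, smul_eq_mul] at h
  exact h

theorem analyticAt_ofScalarsSum_sub [CompleteSpace 𝕜] {c : ℕ → 𝕜}
    (hr : 0 < (ofScalars 𝕜 c).radius) (w : 𝕜) :
    AnalyticAt 𝕜 (fun z => ofScalarsSum c (z - w)) w := by
  have h0 : AnalyticAt 𝕜 (ofScalarsSum c) (w - w) := by
    rw [sub_self]; exact ((ofScalars 𝕜 c).hasFPowerSeriesOnBall hr).analyticAt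
  exact h0.comp (f := fun z => z - w) (analyticAt_id.sub analyticAt_const)

theorem eventually_ofScalarsSum_sub_eq [CompleteSpace 𝕜] {X : Type*} [TopologicalSpace X]
    {c : ℕ → 𝕜} {f g : X → 𝕜} {x : X} (hr : 0 < (ofScalars 𝕜 c).radius) (hf : ContinuousAt f x)
    (h : ∀ᶠ t in 𝓝 x, HasSum (fun n => c n * (f t - f x) ^ n) (g t)) :
    ∀ᶠ t in 𝓝 x, ofScalarsSum c (f t - f x) = g t := by
  have hsmall : ∀ᶠ t in 𝓝 x, f t - f x ∈ eball (0 : 𝕜) (ofScalars 𝕜 c).radius :=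
    tendsto_sub_nhds_zero_iff.mpr hf (isOpen_eball.mem_nhds (mem_eball_self hr))
  filter_upwards [h, hsmall] with t ht hts
  exact (hasSum_ofScalarsSum hts).unique ht

end PowerSeries

theorem frequently_nhdsNE_ofReal {p : ℂ → Prop} {x : ℝ} (h : ∀ᶠ t : ℝ in 𝓝 x, p t) :
    ∃ᶠ z in 𝓝[≠] (x : ℂ), p z := by
  have hT : Tendsto ((↑) : ℝ → ℂ) (𝓝[≠] x) (𝓝[≠] (x : ℂ)) :=
    continuous_ofReal.continuousWithinAt.tendsto_nhdsWithin fun t ht => by simpa using ht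
  exact hT.frequently (h.filter_mono nhdsWithin_le_nhds).frequently

theorem AnalyticAt.eventually_leftInverse_of_ofReal {φ ψ : ℂ → ℂ} {x : ℝ}
    (hφ : AnalyticAt ℂ φ x) (hψ : AnalyticAt ℂ ψ (φ x)) (h : ∀ᶠ t : ℝ in 𝓝 x, ψ (φ t) = t) :
    ∀ᶠ z in 𝓝 (x : ℂ), ψ (φ z) = z :=
  -- the real points near `x` accumulate at `x`
  (hψ.comp hφ).frequently_eq_iff_eventually_eq analyticAt_id |>.mp (frequently_nhdsNE_ofReal h)

theorem radius_ofScalars_pos_of_eventually_summable_ofReal {c : ℕ → ℂ} {x : ℝ}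
    (h : ∀ᶠ t : ℝ in 𝓝 x, Summable fun n => c n * ((t : ℂ) - x) ^ n) :
    0 < (ofScalars ℂ c).radius := by
  obtain ⟨t, ht, hne⟩ : ∃ t : ℝ, Summable (fun n => c n * ((t : ℂ) - x) ^ n) ∧ t ≠ x :=
    ((h.filter_mono nhdsWithin_le_nhds).and (self_mem_nhdsWithin (s := {x}ᶜ))).exists
  exact radius_ofScalars_pos_of_summable (by simpa [sub_eq_zero] using hne) ht

theorem exists_injOn_holomorphic_extension {γ : ℝ → ℂ} {φ ψ : ℂ → ℂ} {t₀ : ℝ}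
    (hφ : AnalyticAt ℂ φ t₀) (hψφ : ∀ᶠ z in 𝓝 (t₀ : ℂ), ψ (φ z) = z)
    (hφγ : ∀ᶠ t : ℝ in 𝓝 t₀, φ t = γ t) :
    ∃ δ > (0 : ℝ), ∃ V : Set ℂ, IsOpen V ∧ (∀ t : ℝ, |t - t₀| < δ → (t : ℂ) ∈ V) ∧
      DifferentiableOn ℂ φ V ∧ Set.InjOn φ V ∧ ∀ t : ℝ, |t - t₀| < δ → φ t = γ t := by
  obtain ⟨r, hr, hball⟩ := eventually_nhds_iff_ball.mp (hφ.eventually_analyticAt.and hψφ)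
  obtain ⟨δ, hδ, hreal⟩ := Metric.eventually_nhds_iff.mp hφγ
  have hsub : ball (t₀ : ℂ) (min r δ) ⊆ ball (t₀ : ℂ) r := ball_subset_ball (min_le_left _ _)
  refine ⟨min r δ, lt_min hr hδ, _, isOpen_ball, fun t ht => ?_,
    fun z hz => (hball z (hsub hz)).1.differentiableAt.differentiableWithinAt,
    LeftInvOn.injOn (f₁' := ψ) fun z hz => (hball z (hsub hz)).2,
    fun t ht => hreal (ht.trans_le (min_le_right _ _))⟩
  rwa [mem_ball, dist_eq, ← ofReal_sub, norm_real, Real.norm_eq_abs]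

theorem stmt19_general (γ : ℝ → ℂ) (t₀ : ℝ)
    (hiff : ∀ f : ℝ → ℂ,
      (∃ a : ℕ → ℂ, ∃ δ > (0 : ℝ), ∀ t : ℝ, |t - t₀| < δ →
          HasSum (fun n : ℕ => a n * ((t : ℂ) - (t₀ : ℂ)) ^ n) (f t)) ↔
      (∃ b : ℕ → ℂ, (∃ s > (0 : ℝ), ∀ z : ℂ, ‖z‖ < s →
          Summable (fun n : ℕ => b n * z ^ n)) ∧
        ∃ ε > (0 : ℝ), ∀ t : ℝ, |t - t₀| < ε →
          HasSum (fun n : ℕ => b n * (γ t - γ t₀) ^ n) (f t))) :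
    ∃ δ > (0 : ℝ), ∃ V : Set ℂ, IsOpen V ∧
      (∀ t : ℝ, |t - t₀| < δ → (t : ℂ) ∈ V) ∧
      ∃ φ : ℂ → ℂ, DifferentiableOn ℂ φ V ∧ Set.InjOn φ V ∧
        ∀ t : ℝ, |t - t₀| < δ → φ (t : ℂ) = γ t := by
  have near (p : ℝ → Prop) : (∃ δ > 0, ∀ t, |t - t₀| < δ → p t) → ∀ᶠ t in 𝓝 t₀, p t :=
    fun ⟨δ, hδ, h⟩ => Metric.eventually_nhds_iff.mpr ⟨δ, hδ, fun t ht => h t ht⟩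
  obtain ⟨a, hγa⟩ := (hiff γ).mpr ⟨affineCoeffs (γ t₀) 1,
    ⟨1, one_pos, fun z _ => (hasSum_affineCoeffs_mul_pow _ _ z).summable⟩,
    1, one_pos, fun t _ => by simpa using hasSum_affineCoeffs_mul_pow (γ t₀) 1 (γ t - γ t₀)⟩
  obtain ⟨b, ⟨s, hs, hb⟩, hbt⟩ := (hiff (↑)).mp ⟨affineCoeffs (t₀ : ℂ) 1, 1, one_pos,
    fun t _ => by simpa using hasSum_affineCoeffs_mul_pow (t₀ : ℂ) 1 ((t : ℂ) - t₀)⟩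
  have hγa := near _ hγa
  have ha := radius_ofScalars_pos_of_eventually_summable_ofReal (hγa.mono fun _ h => h.summable)
  have hb : 0 < (ofScalars ℂ b).radius := radius_ofScalars_pos_of_summable
    (z := ((s / 2 : ℝ) : ℂ)) (by simp [hs.ne']) (hb _ (by simp [abs_of_pos hs, hs]))
  set φ : ℂ → ℂ := fun z => ofScalarsSum a (z - t₀)
  set ψ : ℂ → ℂ := fun w => ofScalarsSum b (w - γ t₀)
  have hφ : AnalyticAt ℂ φ t₀ := analyticAt_ofScalarsSum_sub ha _
  have hφγ : ∀ᶠ t : ℝ in 𝓝 t₀, φ t = γ t :=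
    eventually_ofScalarsSum_sub_eq ha continuous_ofReal.continuousAt hγa
  have hγ : ContinuousAt γ t₀ := (hφ.continuousAt.comp continuous_ofReal.continuousAt).congr hφγ
  have hψγ : ∀ᶠ t : ℝ in 𝓝 t₀, ψ (γ t) = t := eventually_ofScalarsSum_sub_eq hb hγ (near _ hbt)
  have hψ : AnalyticAt ℂ ψ (φ t₀) := hφγ.self_of_nhds ▸ analyticAt_ofScalarsSum_sub hb _
  have hψφ := hφ.eventually_leftInverse_of_ofReal hψ <| by
    filter_upwards [hφγ, hψγ] with t h₁ h₂
    rw [h₁, h₂]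
  obtain ⟨δ, hδ, V, hV, hmem, hdiff, hinj, heq⟩ := exists_injOn_holomorphic_extension hφ hψφ hφγ
  exact ⟨δ, hδ, V, hV, hmem, φ, hdiff, hinj, heq⟩

/-- Let `γ : [0,1] → ℂ` be injective, `t₀ ∈ (0,1)`, and suppose that for
every function `f` defined near `t₀`, `f` is given near `t₀` by a convergent power
series in `t - t₀` iff it is given near `t₀` by a convergent complex power series in
`γ(t) - γ(t₀)` (with positive radius of convergence). If moreover `γ` is `C¹` near
`t₀`, then `γ` is analytic at `t₀`: it agrees near `t₀` with an injective holomorphic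
function defined on an open neighbourhood of `(t₀ - δ, t₀ + δ)` in `ℂ`. -/
theorem stmt19 (γ : ℝ → ℂ) (hγinj : Set.InjOn γ (Set.Icc (0 : ℝ) 1))
    (t₀ : ℝ) (ht₀ : t₀ ∈ Set.Ioo (0 : ℝ) 1)
    (hiff : ∀ f : ℝ → ℂ,
      (∃ a : ℕ → ℂ, ∃ δ > (0 : ℝ), ∀ t : ℝ, |t - t₀| < δ →
          HasSum (fun n : ℕ => a n * ((t : ℂ) - (t₀ : ℂ)) ^ n) (f t)) ↔
      (∃ b : ℕ → ℂ, (∃ s > (0 : ℝ), ∀ z : ℂ, ‖z‖ < s →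
          Summable (fun n : ℕ => b n * z ^ n)) ∧
        ∃ ε > (0 : ℝ), ∀ t : ℝ, |t - t₀| < ε →
          HasSum (fun n : ℕ => b n * (γ t - γ t₀) ^ n) (f t)))
    (hC1 : ∃ η > (0 : ℝ), ContDiffOn ℝ 1 γ (Set.Ioo (t₀ - η) (t₀ + η))) :
    ∃ δ > (0 : ℝ), ∃ V : Set ℂ, IsOpen V ∧
      (∀ t : ℝ, |t - t₀| < δ → (t : ℂ) ∈ V) ∧
      ∃ φ : ℂ → ℂ, DifferentiableOn ℂ φ V ∧ Set.InjOn φ V ∧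
        ∀ t : ℝ, |t - t₀| < δ → φ (t : ℂ) = γ t :=
  stmt19_general γ t₀ hiff
end
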